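/- arXiv:1808.07516 — 13 statements merged into one kernel-verified Lean document; each statement's English description precedes it below -/
import Mathlib

section
/- The skew Clifford algebra sCl(μ, B) is a finite-dimensional 𝕜-vector space, and its dimension is at most 2^n. (Lemma 3.1: the images of 1 and of the products x̄_{i_1} x̄_{i_2} ⋯ x̄_{i_k} with i_1 < i_2 < ⋯ < i_k span sCl(μ, B).) -/
open FreeAlgebra

/-- `μ` is multiplicatively antisymmetric: `μ i j * μ j i = 1` and `μ i i = 1`. -/
def MulAntisym {𝕜 : Type*} [Field 𝕜] {n : ℕ} (μ : Fin n → Fin n → 𝕜) : Prop :=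
  ∀ i j, μ i j * μ j i = 1 ∧ μ i i = 1

/-- `B` is `μ`-symmetric: `B i j = μ i j * B j i`. -/
def MuSymm {𝕜 : Type*} [Field 𝕜] {n : ℕ} (μ B : Fin n → Fin n → 𝕜) : Prop :=
  ∀ i j, B i j = μ i j * B j i

/-- Condition (★): for all `i, j` with `B i j ≠ 0`, one has `μ i k = μ k j` for all `k`. -/
def StarCond {𝕜 : Type*} [Field 𝕜] {n : ℕ} (μ B : Fin n → Fin n → 𝕜) : Prop :=
  ∀ i j, B i j ≠ 0 → ∀ k, μ i k = μ k j

/-- The defining relations of the skew Clifford algebra: identifying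
`x_i x_j + μ i j • (x_j x_i)` with `(2 * B i j) • 1`, which amounts to quotienting the free
algebra by the two-sided ideal generated by
`x_i x_j + μ i j • (x_j x_i) - (2 * B i j) • 1`. -/
inductive sClRel (𝕜 : Type*) [Field 𝕜] (n : ℕ) (μ B : Fin n → Fin n → 𝕜) :
    FreeAlgebra 𝕜 (Fin n) → FreeAlgebra 𝕜 (Fin n) → Prop
  | rel (i j : Fin n) : sClRel 𝕜 n μ B
      (ι 𝕜 i * ι 𝕜 j + μ i j • (ι 𝕜 j * ι 𝕜 i))
      ((2 * B i j) • (1 : FreeAlgebra 𝕜 (Fin n)))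

/-- The skew Clifford algebra `sCl(μ, B)`. -/
abbrev sCl (𝕜 : Type*) [Field 𝕜] (n : ℕ) (μ B : Fin n → Fin n → 𝕜) : Type _ :=
  RingQuot (sClRel 𝕜 n μ B)

/-- The image `x̄_i` of the generator `x_i` in the skew Clifford algebra. -/
noncomputable def sClGen (𝕜 : Type*) [Field 𝕜] (n : ℕ) (μ B : Fin n → Fin n → 𝕜)
    (i : Fin n) : sCl 𝕜 n μ B :=
  RingQuot.mkAlgHom 𝕜 (sClRel 𝕜 n μ B) (ι 𝕜 i)

/-!
The ordered monomials `x̄_{i₁} ⋯ x̄_{i_k}`, `i₁ < ⋯ < i_k`, are indexed by the subsets of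
`Fin n`, so it suffices that they span. Their span contains `1` and, since the generators
generate the algebra, it is everything once it is stable under left multiplication by each
`x̄_i`. Moving `x̄_i` into an ordered monomial uses `x̄_i x̄_j = 2 B_ij - μ_ij x̄_j x̄_i` to pass
a smaller index and `x̄_i² = B_ii` (from `μ_ii = 1` and `2 ≠ 0`) to absorb an equal one; along
the way no index outside `{i} ∪ {i₁, …, i_k}` appears, which is what keeps the induction going.
-/

theorem Submodule.eq_top_of_one_mem_of_mul_mem {R A : Type*} [CommSemiring R] [Semiring A]
    [Algebra R A] {s : Set A} (hs : Algebra.adjoin R s = ⊤) (M : Submodule R A)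
    (one_mem : 1 ∈ M) (mul_mem : ∀ a ∈ s, ∀ m ∈ M, a * m ∈ M) : M = ⊤ := by
  refine Submodule.eq_top_iff'.2 fun x => ?_
  have hx : x ∈ Algebra.adjoin R s := hs ▸ Algebra.mem_top
  have key : ∀ m ∈ M, x * m ∈ M := by
    induction hx using Algebra.adjoin_induction with
    | mem a ha => exact mul_mem a ha
    | algebraMap r => intro m hm; simpa [Algebra.algebraMap_eq_smul_one] using M.smul_mem r hm
    | add a b _ _ ha hb => intro m hm; rw [add_mul]; exact M.add_mem (ha m hm) (hb m hm)
    | mul a b _ _ ha hb => intro m hm; rw [mul_assoc]; exact ha _ (hb m hm)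
  simpa using key 1 one_mem

theorem Submodule.mul_mem_span_of_forall_mul_mem {R A : Type*} [CommSemiring R] [Semiring A]
    [Algebra R A] {a : A} {S T : Set A} (h : ∀ s ∈ S, a * s ∈ span R T) {m : A}
    (hm : m ∈ span R S) : a * m ∈ span R T :=
  (Submodule.map_span_le (LinearMap.mulLeft R a) S _).2 h ⟨m, hm, rfl⟩

namespace sCl

variable {𝕜 : Type*} [Field 𝕜] {n : ℕ} (μ B : Fin n → Fin n → 𝕜)

local notation "x̄" => sClGen 𝕜 n μ B

theorem adjoin_range_sClGen : Algebra.adjoin 𝕜 (Set.range x̄) = ⊤ := by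
  have : Set.range x̄ = RingQuot.mkAlgHom 𝕜 (sClRel 𝕜 n μ B) '' Set.range (ι 𝕜) := by
    rw [← Set.range_comp]; rfl
  rw [this, ← AlgHom.map_adjoin, FreeAlgebra.adjoin_range_ι, Algebra.map_top,
    AlgHom.range_eq_top]
  exact RingQuot.mkAlgHom_surjective 𝕜 _

theorem sClGen_mul_add_smul_mul (i j : Fin n) :
    x̄ i * x̄ j + μ i j • (x̄ j * x̄ i) = (2 * B i j) • (1 : sCl 𝕜 n μ B) := by
  simpa [sClGen] using RingQuot.mkAlgHom_rel 𝕜 (sClRel.rel (μ := μ) (B := B) i j)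

theorem sClGen_mul_self (hchar : (2 : 𝕜) ≠ 0) {i : Fin n} (hμ : μ i i = 1) :
    x̄ i * x̄ i = B i i • (1 : sCl 𝕜 n μ B) := by
  have h := sClGen_mul_add_smul_mul μ B i i
  rw [hμ, one_smul, ← two_smul 𝕜, mul_smul] at h
  exact smul_right_injective _ hchar h

/-- `monomial μ B s = x̄_{i₁} ⋯ x̄_{i_k}` where `s = {i₁ < ⋯ < i_k}`. -/
noncomputable def monomial (s : Finset (Fin n)) : sCl 𝕜 n μ B :=
  ((s.sort (· ≤ ·)).map x̄).prod

@[simp]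
theorem monomial_empty : monomial μ B ∅ = 1 := by
  simp [monomial]

theorem monomial_insert {j : Fin n} {s : Finset (Fin n)} (h : ∀ b ∈ s, j < b) :
    monomial μ B (insert j s) = x̄ j * monomial μ B s := by
  have hj : j ∉ s := fun hjs => lt_irrefl j (h j hjs)
  simp [monomial, Finset.sort_insert (· ≤ ·) (fun b hb => (h b hb).le) hj]

theorem monomial_singleton (j : Fin n) : monomial μ B {j} = x̄ j := by
  simpa using monomial_insert μ B (s := ∅) (j := j) (by simp)

def spanSubsets (t : Finset (Fin n)) : Submodule 𝕜 (sCl 𝕜 n μ B) :=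
  Submodule.span 𝕜 (monomial μ B '' t.powerset)

theorem monomial_mem_spanSubsets {s t : Finset (Fin n)} (h : s ⊆ t) :
    monomial μ B s ∈ spanSubsets μ B t :=
  Submodule.subset_span ⟨s, Finset.mem_coe.2 (Finset.mem_powerset.2 h), rfl⟩

theorem spanSubsets_mono {s t : Finset (Fin n)} (h : s ⊆ t) :
    spanSubsets μ B s ≤ spanSubsets μ B t :=
  Submodule.span_mono (Set.image_mono (Finset.coe_subset.2 (Finset.powerset_mono.2 h)))

theorem sClGen_mul_mem_spanSubsets_insert {j : Fin n} {t : Finset (Fin n)}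
    (h : ∀ b ∈ t, j < b) {m : sCl 𝕜 n μ B} (hm : m ∈ spanSubsets μ B t) :
    x̄ j * m ∈ spanSubsets μ B (insert j t) := by
  refine Submodule.mul_mem_span_of_forall_mul_mem (fun _ hs => ?_) hm
  obtain ⟨s, hst, rfl⟩ := hs
  have hst : s ⊆ t := Finset.mem_powerset.1 hst
  rw [← monomial_insert μ B fun b hb => h b (hst hb)]
  exact monomial_mem_spanSubsets μ B (Finset.insert_subset_insert j hst)

theorem sClGen_mul_monomial_mem_spanSubsets (hchar : (2 : 𝕜) ≠ 0) (hμ : ∀ i, μ i i = 1)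
    (t : Finset (Fin n)) (i : Fin n) :
    x̄ i * monomial μ B t ∈ spanSubsets μ B (insert i t) := by
  induction t using Finset.induction_on_min generalizing i with
  | empty => simpa [← monomial_singleton μ B] using
      monomial_mem_spanSubsets μ B (Finset.Subset.refl {i})
  | insert j t hjt ih =>
    rcases lt_trichotomy i j with hij | rfl | hji
    · have hi : ∀ b ∈ insert j t, i < b := by
        simpa [hij] using fun b hb => hij.trans (hjt b hb)
      rw [← monomial_insert μ B hi]
      exact monomial_mem_spanSubsets μ B le_rfl
    · rw [monomial_insert μ B hjt, ← mul_assoc, sClGen_mul_self μ B hchar (hμ i),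
        smul_mul_assoc, one_mul]
      exact Submodule.smul_mem _ _ (monomial_mem_spanSubsets μ B (by grind))
    · have hswap : x̄ i * x̄ j = (2 * B i j) • 1 - μ i j • (x̄ j * x̄ i) :=
        eq_sub_of_add_eq (sClGen_mul_add_smul_mul μ B i j)
      rw [monomial_insert μ B hjt, ← mul_assoc, hswap, sub_mul, smul_mul_assoc, smul_mul_assoc,
        one_mul, mul_assoc]
      refine Submodule.sub_mem _ (Submodule.smul_mem _ _
        (monomial_mem_spanSubsets μ B (by grind))) (Submodule.smul_mem _ _ ?_)
      have hj : ∀ b ∈ insert i t, j < b := by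
        simpa [hji] using hjt
      exact spanSubsets_mono μ B (by grind)
        (sClGen_mul_mem_spanSubsets_insert μ B hj (ih i))

theorem span_range_monomial_eq_top (hchar : (2 : 𝕜) ≠ 0) (hμ : ∀ i, μ i i = 1) :
    Submodule.span 𝕜 (Set.range (monomial μ B)) = ⊤ := by
  refine Submodule.eq_top_of_one_mem_of_mul_mem (adjoin_range_sClGen μ B) _
    (Submodule.subset_span ⟨∅, monomial_empty μ B⟩) ?_
  rintro _ ⟨i, rfl⟩ m hm
  refine Submodule.mul_mem_span_of_forall_mul_mem (fun _ ht => ?_) hm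
  obtain ⟨t, rfl⟩ := ht
  exact Submodule.span_mono (Set.image_subset_range _ _)
    (sClGen_mul_monomial_mem_spanSubsets μ B hchar hμ t i)

end sCl

theorem skewClifford_finiteDimensional_and_finrank_le_general
    (𝕜 : Type*) [Field 𝕜] (hchar : (2 : 𝕜) ≠ 0) (n : ℕ)
    (μ B : Fin n → Fin n → 𝕜) (hμ : MulAntisym μ) :
    FiniteDimensional 𝕜 (sCl 𝕜 n μ B) ∧ Module.finrank 𝕜 (sCl 𝕜 n μ B) ≤ 2 ^ n := by
  have hspan := sCl.span_range_monomial_eq_top μ B hchar fun i => (hμ i i).2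
  refine ⟨Module.finite_def.2 (Submodule.fg_def.2 ⟨_, Set.finite_range _, hspan⟩), ?_⟩
  simpa [Fintype.card_finset] using finrank_le_of_span_eq_top hspan

/-- Lemma 3.1: the skew Clifford algebra is a finite-dimensional 𝕜-vector space of
dimension at most `2 ^ n`. -/
theorem skewClifford_finiteDimensional_and_finrank_le
    (𝕜 : Type*) [Field 𝕜] (hchar : (2 : 𝕜) ≠ 0) (n : ℕ) (hn : 1 ≤ n)
    (μ B : Fin n → Fin n → 𝕜) (hμ : MulAntisym μ) (hB : MuSymm μ B) :
    FiniteDimensional 𝕜 (sCl 𝕜 n μ B) ∧ Module.finrank 𝕜 (sCl 𝕜 n μ B) ≤ 2 ^ n :=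
  skewClifford_finiteDimensional_and_finrank_le_general 𝕜 hchar n μ B hμ
end

section
/- The 𝕜-linear map g : (Fin n → 𝕜) → sCl(μ, B), sending the i-th standard basis vector to x̄_i, is injective if and only if condition (★) holds. (Theorem 3.10, equivalence (a) ⇔ (c).) -/
open FreeAlgebra

namespace SkewCliffordAux

variable {𝕜 : Type*} [Field 𝕜] {n : ℕ}

/-- `∏_{s ∈ S, s < t} (-μ i s)`. -/
def Pl (μ : Fin n → Fin n → 𝕜) (i t : Fin n) (S : Finset (Fin n)) : 𝕜 :=
  ∏ s ∈ S.filter (· < t), (-μ i s)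

/-- coefficient for annihilating `j` with operator `i`. -/
def kap (B : Fin n → Fin n → 𝕜) (i j : Fin n) : 𝕜 := if j = i then B i i else 2 * B i j

/-- creation matrix -/
def Cm (μ : Fin n → Fin n → 𝕜) (i : Fin n) :
    Matrix (Finset (Fin n)) (Finset (Fin n)) 𝕜 :=
  fun U S => if i ∉ S ∧ U = insert i S then Pl μ i i S else 0

/-- annihilation matrix -/
def Am (μ B : Fin n → Fin n → 𝕜) (i : Fin n) :
    Matrix (Finset (Fin n)) (Finset (Fin n)) 𝕜 :=
  fun U S => ∑ l ∈ S, if l ≤ i ∧ U = S.erase l then kap B i l * Pl μ i l S else 0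

def Mm (μ B : Fin n → Fin n → 𝕜) (i : Fin n) :
    Matrix (Finset (Fin n)) (Finset (Fin n)) 𝕜 :=
  Cm μ i + Am μ B i

section Pl

variable (μ : Fin n → Fin n → 𝕜) (i t l : Fin n) (S : Finset (Fin n))

lemma Pl_erase_of_not_lt (h : ¬ l < t) : Pl μ i t (S.erase l) = Pl μ i t S := by
  unfold Pl
  rw [Finset.filter_erase, Finset.erase_eq_of_notMem]
  simp [h]

lemma Pl_erase_of_lt (hl : l ∈ S) (h : l < t) :
    Pl μ i t S = (-μ i l) * Pl μ i t (S.erase l) := by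
  unfold Pl
  rw [Finset.filter_erase]
  exact (Finset.mul_prod_erase (S.filter (· < t)) (fun s => -μ i s)
    (Finset.mem_filter.2 ⟨hl, h⟩)).symm

lemma Pl_insert_of_not_lt (h : ¬ l < t) : Pl μ i t (insert l S) = Pl μ i t S := by
  unfold Pl
  congr 1
  rw [Finset.filter_insert, if_neg h]

lemma Pl_insert_of_lt (hl : l ∉ S) (h : l < t) :
    Pl μ i t (insert l S) = (-μ i l) * Pl μ i t S := by
  unfold Pl
  rw [Finset.filter_insert, if_pos h, Finset.prod_insert (by simp [hl])]

end Pl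

section Expand

variable (μ B : Fin n → Fin n → 𝕜) (i j : Fin n)
variable (X : Matrix (Finset (Fin n)) (Finset (Fin n)) 𝕜) (U S : Finset (Fin n))

lemma mul_Cm_apply :
    (X * Cm μ j) U S = if j ∉ S then Pl μ j j S * X U (insert j S) else 0 := by
  rw [Matrix.mul_apply]
  by_cases h : j ∈ S
  · simp [Cm, h]
  · rw [Finset.sum_eq_single (insert j S)]
    · simp [Cm, h, mul_comm]
    · intro V _ hV
      simp [Cm, h, hV]
    · intro h'; exact absurd (Finset.mem_univ _) h'

lemma Cm_mul_apply :
    (Cm μ i * X) U S = if i ∈ U then Pl μ i i (U.erase i) * X (U.erase i) S else 0 := by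
  rw [Matrix.mul_apply]
  by_cases h : i ∈ U
  · rw [Finset.sum_eq_single (U.erase i)]
    · simp [Cm, h, Finset.insert_erase]
    · intro V _ hV
      have : ¬ (i ∉ V ∧ U = insert i V) := by
        rintro ⟨h1, rfl⟩
        exact hV (Finset.erase_insert h1).symm
      simp [Cm, this]
    · intro h'; exact absurd (Finset.mem_univ _) h'
  · rw [if_neg h]
    apply Finset.sum_eq_zero
    intro V _
    have : ¬ (i ∉ V ∧ U = insert i V) := by
      rintro ⟨h1, rfl⟩
      exact h (Finset.mem_insert_self _ _)
    simp [Cm, this]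

lemma mul_Am_apply :
    (X * Am μ B j) U S =
      ∑ l ∈ S, if l ≤ j then kap B j l * Pl μ j l S * X U (S.erase l) else 0 := by
  rw [Matrix.mul_apply]
  simp only [Am, Finset.mul_sum]
  rw [Finset.sum_comm]
  refine Finset.sum_congr rfl ?_
  intro l _
  by_cases hl : l ≤ j
  · rw [Finset.sum_eq_single (S.erase l)]
    · simp [hl]; ring
    · intro V _ hV
      simp [hl, hV]
    · intro h'; exact absurd (Finset.mem_univ _) h'
  · rw [if_neg hl]
    apply Finset.sum_eq_zero
    intro V _
    simp [hl]

end Expand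

end SkewCliffordAux

namespace SkewCliffordAux

section Main

variable {𝕜 : Type*} [Field 𝕜] {n : ℕ} {μ B : Fin n → Fin n → 𝕜}

lemma hμne (hμ : ∀ i j, μ i j * μ j i = 1 ∧ μ i i = 1) (i j : Fin n) : μ i j ≠ 0 := by
  intro h
  have := (hμ i j).1
  rw [h, zero_mul] at this
  exact zero_ne_one this

lemma kapB_ne (i l : Fin n) (h : kap B i l ≠ 0) : B i l ≠ 0 := by
  intro hB0
  apply h
  unfold kap
  split_ifs with h'
  · subst h'; exact hB0
  · rw [hB0, mul_zero]

lemma Bop_ne (hB : ∀ i j, B i j = μ i j * B j i) {i j : Fin n} (h : B i j ≠ 0) : B j i ≠ 0 := by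
  intro h0
  apply h
  rw [hB i j, h0, mul_zero]

lemma prod_pair {p q : Fin n} (F : Finset (Fin n)) (h : ∀ s ∈ F, μ p s * μ q s = 1) :
    (∏ s ∈ F, (-μ p s)) * (∏ s ∈ F, (-μ q s)) = 1 := by
  rw [← Finset.prod_mul_distrib]
  apply Finset.prod_eq_one
  intro s hs
  rw [neg_mul_neg]
  exact h s hs

lemma L1 (hμ : ∀ i j, μ i j * μ j i = 1 ∧ μ i i = 1) (i j : Fin n) :
    Cm μ i * Cm μ j + μ i j • (Cm μ j * Cm μ i) = 0 := by
  ext U S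
  rw [Matrix.add_apply, Matrix.smul_apply, mul_Cm_apply, mul_Cm_apply, Matrix.zero_apply,
    smul_eq_mul]
  by_cases hj : j ∈ S
  · by_cases hi : i ∈ S
    · simp [hi, hj]
    · rw [if_neg (not_not_intro hj), if_pos hi]
      have : j ∈ insert i S := Finset.mem_insert_of_mem hj
      simp [Cm, this]
  · by_cases hi : i ∈ S
    · rw [if_pos hj, if_neg (not_not_intro hi)]
      have : i ∈ insert j S := Finset.mem_insert_of_mem hi
      simp [Cm, this]
    · rw [if_pos hj, if_pos hi]
      by_cases hij : i = j
      · subst hij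
        simp [Cm]
      · have hins1 : i ∉ insert j S := by simp [hij, hi]
        have hins2 : j ∉ insert i S := by simp [Ne.symm hij, hj]
        by_cases hU : U = insert i (insert j S)
        · have hU2 : U = insert j (insert i S) := by rw [hU, Finset.insert_comm]
          rw [show Cm μ i U (insert j S) = Pl μ i i (insert j S) from by
              simp [Cm, hins1, hU],
            show Cm μ j U (insert i S) = Pl μ j j (insert i S) from by
              simp [Cm, hins2, hU2]]
          rcases lt_trichotomy i j with h | h | h
          · rw [Pl_insert_of_not_lt μ i i j S (by omega), Pl_insert_of_lt μ j j i S hi h]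
            have h1 := (hμ i j).1
            linear_combination (-(Pl μ i i S * Pl μ j j S)) * h1
          · exact absurd h hij
          · rw [Pl_insert_of_lt μ i i j S hj h, Pl_insert_of_not_lt μ j j i S (by omega)]
            ring
        · have hU2 : U ≠ insert j (insert i S) := by rw [Finset.insert_comm]; exact hU
          simp [Cm, hU, hU2]

end Main

end SkewCliffordAux
namespace SkewCliffordAux

section Main
variable {𝕜 : Type*} [Field 𝕜] {n : ℕ} {μ B : Fin n → Fin n → 𝕜}

lemma sum_erase_swap (S : Finset (Fin n)) (f : Fin n → Fin n → 𝕜) :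
    ∑ l ∈ S, ∑ m ∈ S.erase l, f l m = ∑ l ∈ S, ∑ m ∈ S.erase l, f m l := by
  have key : ∀ g : Fin n → Fin n → 𝕜,
      ∑ l ∈ S, ∑ m ∈ S.erase l, g l m = ∑ l ∈ S, ∑ m ∈ S, if m = l then 0 else g l m := by
    intro g
    refine Finset.sum_congr rfl fun l _ => ?_
    rw [← Finset.sum_erase S (f := fun m => if m = l then 0 else g l m) (a := l) (if_pos rfl)]
    refine Finset.sum_congr rfl fun m hm => ?_
    rw [if_neg (Finset.ne_of_mem_erase hm)]
  rw [key, key fun l m => f m l, Finset.sum_comm]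
  refine Finset.sum_congr rfl fun l _ => Finset.sum_congr rfl fun m _ => ?_
  rcases eq_or_ne m l with h | h
  · simp [h]
  · rw [if_neg h, if_neg (Ne.symm h)]

lemma sum_pair_cancel (S : Finset (Fin n)) (F G : Fin n → Fin n → 𝕜) (c : 𝕜)
    (h : ∀ l ∈ S, ∀ m ∈ S.erase l, F l m + c * G m l = 0) :
    (∑ l ∈ S, ∑ m ∈ S.erase l, F l m) + c * (∑ l ∈ S, ∑ m ∈ S.erase l, G l m) = 0 := by
  rw [sum_erase_swap S G]
  simp only [Finset.mul_sum]
  rw [← Finset.sum_add_distrib]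
  apply Finset.sum_eq_zero
  intro l hl
  rw [← Finset.sum_add_distrib]
  apply Finset.sum_eq_zero
  intro m hm
  exact h l hl m hm

lemma pairAA (hμ : ∀ i j, μ i j * μ j i = 1 ∧ μ i i = 1)
    (hB : ∀ i j, B i j = μ i j * B j i)
    (hstar : ∀ i j, B i j ≠ 0 → ∀ k, μ i k = μ k j)
    (i j l m : Fin n) (S : Finset (Fin n)) (hl : l ∈ S) (hm : m ∈ S) (hml : m ≠ l) :
    kap B j l * Pl μ j l S * (kap B i m * Pl μ i m (S.erase l)) +
      μ i j * (kap B i m * Pl μ i m S * (kap B j l * Pl μ j l (S.erase m))) = 0 := by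
  by_cases hKjl : kap B j l = 0
  · simp [hKjl]
  by_cases hKim : kap B i m = 0
  · simp [hKim]
  have hBjl := kapB_ne j l hKjl
  have hBim := kapB_ne i m hKim
  rcases lt_or_gt_of_ne hml with h | h
  · -- m < l
    rw [Pl_erase_of_not_lt μ i m l S (by omega), Pl_erase_of_lt μ j l m S hm h]
    have hμjm : μ i j = μ j m := hstar i m hBim j
    linear_combination (kap B j l * kap B i m * Pl μ i m S * Pl μ j l (S.erase m)) * hμjm
  · -- l < m
    rw [Pl_erase_of_lt μ i m l S hl h, Pl_erase_of_not_lt μ j l m S (by omega)]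
    have h1 : μ l i = μ i j := hstar l j (Bop_ne hB hBjl) i
    have h2 : μ i l * μ l i = 1 := (hμ i l).1
    set K := kap B j l * kap B i m * Pl μ j l S * Pl μ i m (S.erase l) with hK
    linear_combination (K * μ i l) * h1 + (-K) * h2

lemma L2 (hμ : ∀ i j, μ i j * μ j i = 1 ∧ μ i i = 1)
    (hB : ∀ i j, B i j = μ i j * B j i)
    (hstar : ∀ i j, B i j ≠ 0 → ∀ k, μ i k = μ k j) (i j : Fin n) :
    Am μ B i * Am μ B j + μ i j • (Am μ B j * Am μ B i) = 0 := by
  ext U S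
  rw [Matrix.add_apply, Matrix.smul_apply, mul_Am_apply, mul_Am_apply, Matrix.zero_apply,
    smul_eq_mul]
  have expand : ∀ p q : Fin n,
      (∑ l ∈ S, if l ≤ q then kap B q l * Pl μ q l S * Am μ B p U (S.erase l) else 0)
        = ∑ l ∈ S, ∑ m ∈ S.erase l,
            (if l ≤ q ∧ m ≤ p ∧ U = (S.erase l).erase m then
              kap B q l * Pl μ q l S * (kap B p m * Pl μ p m (S.erase l)) else 0) := by
    intro p q
    refine Finset.sum_congr rfl fun l hl => ?_
    by_cases h : l ≤ q
    · rw [if_pos h]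
      show kap B q l * Pl μ q l S * (∑ m ∈ S.erase l, _) = _
      rw [Finset.mul_sum]
      refine Finset.sum_congr rfl fun m hm => ?_
      by_cases h2 : m ≤ p ∧ U = (S.erase l).erase m
      · rw [if_pos h2, if_pos ⟨h, h2⟩]
      · rw [if_neg h2, mul_zero, if_neg (by tauto)]
    · rw [if_neg h]
      symm
      apply Finset.sum_eq_zero
      intro m hm
      rw [if_neg (by tauto)]
  rw [expand i j, expand j i]
  apply sum_pair_cancel
  intro l hl m hm
  have hml : m ≠ l := Finset.ne_of_mem_erase hm
  have hmS : m ∈ S := Finset.mem_of_mem_erase hm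
  have herase : (S.erase m).erase l = (S.erase l).erase m := Finset.erase_right_comm
  by_cases hc : l ≤ j ∧ m ≤ i ∧ U = (S.erase l).erase m
  · rw [if_pos hc, if_pos (show m ≤ i ∧ l ≤ j ∧ U = (S.erase m).erase l from
      ⟨hc.2.1, hc.1, by rw [herase]; exact hc.2.2⟩)]
    exact pairAA hμ hB hstar i j l m S hl hmS hml
  · rw [if_neg hc, if_neg (show ¬(m ≤ i ∧ l ≤ j ∧ U = (S.erase m).erase l) by
      rw [herase]; tauto), mul_zero, add_zero]

end Main
end SkewCliffordAux
namespace SkewCliffordAux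
section Main
variable {𝕜 : Type*} [Field 𝕜] {n : ℕ} {μ B : Fin n → Fin n → 𝕜}

lemma prodII (hμ : ∀ i j, μ i j * μ j i = 1 ∧ μ i i = 1)
    (hstar : ∀ i j, B i j ≠ 0 → ∀ k, μ i k = μ k j)
    {i j : Fin n} (hBji : B j i ≠ 0) (S : Finset (Fin n)) :
    Pl μ i i S * Pl μ j i S = 1 := by
  apply prod_pair
  intro s _
  have h1 := hstar j i hBji s
  rw [h1]
  exact (hμ i s).1

lemma diag1 (hμ : ∀ i j, μ i j * μ j i = 1 ∧ μ i i = 1)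
    (hstar : ∀ i j, B i j ≠ 0 → ∀ k, μ i k = μ k j)
    (i j : Fin n) (S : Finset (Fin n)) :
    Pl μ i i S * (if i ≤ j then kap B j i * Pl μ j i S else 0)
      = if i ≤ j then kap B j i else 0 := by
  by_cases hij : i ≤ j
  · rw [if_pos hij, if_pos hij]
    by_cases hK : kap B j i = 0
    · simp [hK]
    · have hBji := kapB_ne j i hK
      have hprod := prodII hμ hstar hBji S
      linear_combination (kap B j i) * hprod
  · simp [hij]

lemma diag2 (hμ : ∀ i j, μ i j * μ j i = 1 ∧ μ i i = 1)
    (hB : ∀ i j, B i j = μ i j * B j i)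
    (hstar : ∀ i j, B i j ≠ 0 → ∀ k, μ i k = μ k j)
    (i j : Fin n) (S : Finset (Fin n)) :
    μ i j * (Pl μ i i S * (if i ≤ j then kap B j i * Pl μ j i S else 0))
      = if i ≤ j then kap B j i else 0 := by
  by_cases hij : i ≤ j
  · rw [if_pos hij, if_pos hij]
    by_cases hK : kap B j i = 0
    · simp [hK]
    · have hBji := kapB_ne j i hK
      have hμ1 : μ i j = 1 := by
        have hBij : B i j ≠ 0 := Bop_ne hB hBji
        have h := hstar i j hBij i
        rw [← h]
        exact (hμ i i).2
      have hprod := prodII hμ hstar hBji S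
      rw [hμ1, one_mul]
      linear_combination (kap B j i) * hprod
  · simp [hij]

lemma pairCA (hμ : ∀ i j, μ i j * μ j i = 1 ∧ μ i i = 1)
    (hB : ∀ i j, B i j = μ i j * B j i)
    (hstar : ∀ i j, B i j ≠ 0 → ∀ k, μ i k = μ k j)
    (i j l : Fin n) (S : Finset (Fin n)) (hiS : i ∉ S) (hl : l ∈ S) :
    Pl μ i i (S.erase l) * (kap B j l * Pl μ j l S) +
      μ i j * (Pl μ i i S * (kap B j l * Pl μ j l (insert i S))) = 0 := by
  have hli : l ≠ i := fun h => hiS (h ▸ hl)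
  by_cases hK : kap B j l = 0
  · simp [hK]
  have hBjl := kapB_ne j l hK
  rcases lt_or_gt_of_ne hli with h | h
  · -- l < i
    rw [Pl_erase_of_lt μ i i l S hl h, Pl_insert_of_not_lt μ j l i S (by omega)]
    have h1 : μ l i = μ i j := hstar l j (Bop_ne hB hBjl) i
    have h2 : μ i l * μ l i = 1 := (hμ i l).1
    set C := Pl μ i i (S.erase l) * kap B j l * Pl μ j l S with hC
    linear_combination (C * μ i l) * h1 + (-C) * h2
  · -- i < l
    rw [Pl_erase_of_not_lt μ i i l S (by omega), Pl_insert_of_lt μ j l i S hiS h]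
    have h2 := (hμ i j).1
    set C := Pl μ i i S * kap B j l * Pl μ j l S with hC
    linear_combination (-C) * h2

lemma L3 (hμ : ∀ i j, μ i j * μ j i = 1 ∧ μ i i = 1)
    (hB : ∀ i j, B i j = μ i j * B j i)
    (hstar : ∀ i j, B i j ≠ 0 → ∀ k, μ i k = μ k j) (i j : Fin n) :
    Cm μ i * Am μ B j + μ i j • (Am μ B j * Cm μ i)
      = (if i ≤ j then kap B j i else 0) • (1 : Matrix (Finset (Fin n)) (Finset (Fin n)) 𝕜) := by
  ext U S
  rw [Matrix.add_apply, Matrix.smul_apply, Matrix.smul_apply, Matrix.one_apply, Cm_mul_apply,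
    mul_Cm_apply, smul_eq_mul, smul_eq_mul]
  by_cases hiS : i ∈ S
  · rw [if_neg (not_not_intro hiS), mul_zero, add_zero]
    by_cases hiU : i ∈ U
    · rw [if_pos hiU]
      by_cases hUS : U = S
      · subst hUS
        rw [if_pos rfl, mul_one]
        have hAm : Am μ B j (U.erase i) U = if i ≤ j then kap B j i * Pl μ j i U else 0 := by
          show (∑ l ∈ U, if l ≤ j ∧ U.erase i = U.erase l then kap B j l * Pl μ j l U else 0) = _
          rw [Finset.sum_eq_single i]
          · by_cases h : i ≤ j <;> simp [h]
          · intro l hlU hli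
            have hne : U.erase i ≠ U.erase l := by
              intro hEq
              have h1 : l ∈ U.erase i := Finset.mem_erase.2 ⟨hli, hlU⟩
              rw [hEq] at h1
              exact (Finset.notMem_erase l U) h1
            simp [hne]
          · intro h; exact absurd hiU h
        rw [hAm, Pl_erase_of_not_lt μ i i i U (lt_irrefl i)]
        exact diag1 hμ hstar i j U
      · rw [if_neg hUS, mul_zero]
        have hz : Am μ B j (U.erase i) S = 0 := by
          apply Finset.sum_eq_zero
          intro l hlS
          have hcond : ¬(l ≤ j ∧ U.erase i = S.erase l) := by
            rintro ⟨-, hEq⟩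
            by_cases hli : l = i
            · subst hli
              apply hUS
              rw [← Finset.insert_erase hiU, hEq, Finset.insert_erase hlS]
            · have h1 : i ∈ S.erase l := Finset.mem_erase.2 ⟨fun h => hli h.symm, hiS⟩
              rw [← hEq] at h1
              exact (Finset.notMem_erase i U) h1
          simp [hcond]
        rw [hz, mul_zero]
    · rw [if_neg hiU]
      have hne : U ≠ S := fun h => hiU (h ▸ hiS)
      rw [if_neg hne, mul_zero]
  · rw [if_pos hiS]
    have hAm : Am μ B j U (insert i S)
        = (if i ≤ j ∧ U = S then kap B j i * Pl μ j i (insert i S) else 0)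
          + ∑ l ∈ S, if l ≤ j ∧ U = (insert i S).erase l
              then kap B j l * Pl μ j l (insert i S) else 0 := by
      show (∑ l ∈ insert i S, if l ≤ j ∧ U = (insert i S).erase l
          then kap B j l * Pl μ j l (insert i S) else 0) = _
      rw [Finset.sum_insert hiS, Finset.erase_insert hiS]
    rw [hAm]
    by_cases hUS : U = S
    · subst hUS
      rw [if_neg hiS, zero_add, if_pos rfl, mul_one]
      have hz : (∑ l ∈ U, if l ≤ j ∧ U = (insert i U).erase l
          then kap B j l * Pl μ j l (insert i U) else 0) = 0 := by
        apply Finset.sum_eq_zero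
        intro l hlS
        have hli : l ≠ i := fun h => hiS (h ▸ hlS)
        have hcond : ¬(l ≤ j ∧ U = (insert i U).erase l) := by
          rintro ⟨-, hEq⟩
          have h1 : i ∈ (insert i U).erase l :=
            Finset.mem_erase.2 ⟨fun h => hli h.symm, Finset.mem_insert_self i U⟩
          rw [← hEq] at h1
          exact hiS h1
        simp [hcond]
      rw [hz, add_zero, Pl_insert_of_not_lt μ j i i U (lt_irrefl i)]
      have : (if i ≤ j ∧ U = U then kap B j i * Pl μ j i U else 0)
          = if i ≤ j then kap B j i * Pl μ j i U else 0 := by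
        simp
      rw [this]
      exact diag2 hμ hB hstar i j U
    · rw [if_neg hUS, mul_zero]
      rw [if_neg (fun h : i ≤ j ∧ U = S => hUS h.2), zero_add]
      by_cases hiU : i ∈ U
      · rw [if_pos hiU]
        show Pl μ i i (U.erase i) * (∑ l ∈ S, if l ≤ j ∧ U.erase i = S.erase l
            then kap B j l * Pl μ j l S else 0) + _ = 0
        rw [Finset.mul_sum, Finset.mul_sum, Finset.mul_sum, ← Finset.sum_add_distrib]
        apply Finset.sum_eq_zero
        intro l hlS
        have hli : l ≠ i := fun h => hiS (h ▸ hlS)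
        have hEquiv : (U.erase i = S.erase l) ↔ (U = (insert i S).erase l) := by
          rw [Finset.erase_insert_of_ne (fun h => hli h.symm)]
          constructor
          · intro h; rw [← Finset.insert_erase hiU, h]
          · intro h
            rw [h, Finset.erase_insert (fun hmem => hiS (Finset.mem_of_mem_erase hmem))]
        by_cases hc : l ≤ j ∧ U.erase i = S.erase l
        · rw [if_pos hc, if_pos ⟨hc.1, hEquiv.1 hc.2⟩, hc.2]
          exact pairCA hμ hB hstar i j l S hiS hlS
        · rw [if_neg hc, if_neg (fun h => hc ⟨h.1, hEquiv.2 h.2⟩)]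
          simp
      · rw [if_neg hiU, zero_add]
        have hz : (∑ l ∈ S, if l ≤ j ∧ U = (insert i S).erase l
            then kap B j l * Pl μ j l (insert i S) else 0) = 0 := by
          apply Finset.sum_eq_zero
          intro l hlS
          have hli : l ≠ i := fun h => hiS (h ▸ hlS)
          have hcond : ¬(l ≤ j ∧ U = (insert i S).erase l) := by
            rintro ⟨-, hEq⟩
            apply hiU
            rw [hEq]
            exact Finset.mem_erase.2 ⟨fun h => hli h.symm, Finset.mem_insert_self i S⟩
          simp [hcond]
        rw [hz, mul_zero, mul_zero]

end Main
end SkewCliffordAux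
namespace SkewCliffordAux
section Main
variable {𝕜 : Type*} [Field 𝕜] {n : ℕ} {μ B : Fin n → Fin n → 𝕜}

lemma Bop_ne' (hB : ∀ i j, B i j = μ i j * B j i) {i j : Fin n} (h : B i j = 0) :
    B j i = 0 := by
  rw [hB j i, h, mul_zero]

lemma Etotal (hμ : ∀ i j, μ i j * μ j i = 1 ∧ μ i i = 1)
    (hB : ∀ i j, B i j = μ i j * B j i)
    (hstar : ∀ i j, B i j ≠ 0 → ∀ k, μ i k = μ k j) (i j : Fin n) :
    (if i ≤ j then kap B j i else 0) + μ i j * (if j ≤ i then kap B i j else 0)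
      = 2 * B i j := by
  have hone : B i j ≠ 0 → μ i j = 1 := by
    intro hBij
    have h := hstar i j hBij i
    rw [← h]
    exact (hμ i i).2
  rcases lt_trichotomy i j with h | h | h
  · rw [if_pos h.le, if_neg (not_le_of_gt h), mul_zero, add_zero]
    unfold kap
    rw [if_neg (ne_of_lt h)]
    by_cases hBij : B i j = 0
    · rw [hBij, mul_zero, (Bop_ne' hB hBij : B j i = 0), mul_zero]
    · rw [hB i j, hone hBij, one_mul]
  · subst h
    rw [if_pos le_rfl]
    unfold kap
    rw [if_pos rfl, (hμ i i).2, one_mul]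
    ring
  · rw [if_neg (not_le_of_gt h), if_pos h.le, zero_add]
    unfold kap
    rw [if_neg (ne_of_lt h)]
    by_cases hBij : B i j = 0
    · rw [hBij, mul_zero, mul_zero]
    · rw [hone hBij, one_mul]

lemma Mrel (hμ : ∀ i j, μ i j * μ j i = 1 ∧ μ i i = 1)
    (hB : ∀ i j, B i j = μ i j * B j i)
    (hstar : ∀ i j, B i j ≠ 0 → ∀ k, μ i k = μ k j) (i j : Fin n) :
    Mm μ B i * Mm μ B j + μ i j • (Mm μ B j * Mm μ B i)
      = (2 * B i j) • (1 : Matrix (Finset (Fin n)) (Finset (Fin n)) 𝕜) := by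
  have keyb : Am μ B i * Cm μ j + μ i j • (Cm μ j * Am μ B i)
      = (μ i j * (if j ≤ i then kap B i j else 0)) •
          (1 : Matrix (Finset (Fin n)) (Finset (Fin n)) 𝕜) := by
    have h := congrArg (fun X : Matrix (Finset (Fin n)) (Finset (Fin n)) 𝕜 => μ i j • X)
      (L3 hμ hB hstar j i)
    simp only [smul_add, smul_smul, (hμ i j).1, one_smul] at h
    rw [add_comm] at h
    exact h
  have expand : Mm μ B i * Mm μ B j + μ i j • (Mm μ B j * Mm μ B i)
      = (Cm μ i * Cm μ j + μ i j • (Cm μ j * Cm μ i))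
        + ((Am μ B i * Am μ B j + μ i j • (Am μ B j * Am μ B i))
        + ((Cm μ i * Am μ B j + μ i j • (Am μ B j * Cm μ i))
        + (Am μ B i * Cm μ j + μ i j • (Cm μ j * Am μ B i)))) := by
    unfold Mm
    simp only [Matrix.add_mul, Matrix.mul_add, smul_add]
    abel
  rw [expand, L1 hμ, L2 hμ hB hstar, L3 hμ hB hstar, keyb, zero_add, zero_add,
    ← add_smul, Etotal hμ hB hstar]

end Main
end SkewCliffordAux
open SkewCliffordAux in
/-- Theorem 3.10 (a) ⇔ (c): the linear map `g` sending the `i`-th standard basis vector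
to `x̄_i` is injective if and only if condition (★) holds. -/
theorem skewClifford_g_injective_iff_starCond
    (𝕜 : Type*) [Field 𝕜] (hchar : (2 : 𝕜) ≠ 0) (n : ℕ) (hn : 1 ≤ n)
    (μ B : Fin n → Fin n → 𝕜) (hμ : MulAntisym μ) (hB : MuSymm μ B)
    (g : (Fin n → 𝕜) →ₗ[𝕜] sCl 𝕜 n μ B)
    (hg : ∀ i, g (Pi.single i 1) = sClGen 𝕜 n μ B i) :
    Function.Injective g ↔ StarCond μ B := by
  have hμ' : ∀ i j, μ i j * μ j i = 1 ∧ μ i i = 1 := hμ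
  have hB' : ∀ i j, B i j = μ i j * B j i := hB
  constructor
  · -- (injective) → (★)
    intro hinj i j hBij k
    by_contra hk
    set y : Fin n → sCl 𝕜 n μ B := sClGen 𝕜 n μ B with hy
    have rel : ∀ a b, y a * y b + μ a b • (y b * y a) = (2 * B a b) • (1 : sCl 𝕜 n μ B) := by
      intro a b
      have h := RingQuot.mkAlgHom_rel 𝕜 (sClRel.rel a b : sClRel 𝕜 n μ B _ _)
      simpa [hy, sClGen, map_add, map_mul, map_smul, map_one] using h
    have hmul : ∀ a b, y a * y b = (2 * B a b) • (1 : sCl 𝕜 n μ B) - μ a b • (y b * y a) :=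
      fun a b => eq_sub_iff_add_eq.2 (rel a b)
    have e1 : ∀ a b c : Fin n, y a * (y b * y c)
        = (2 * B a b) • y c - (μ a b * (2 * B a c)) • y b
          + (μ a b * μ a c) • (y b * (y c * y a)) := by
      intro a b c
      calc y a * (y b * y c) = (y a * y b) * y c := (mul_assoc _ _ _).symm
        _ = ((2 * B a b) • (1 : sCl 𝕜 n μ B) - μ a b • (y b * y a)) * y c := by rw [hmul a b]
        _ = (2 * B a b) • y c - μ a b • (y b * (y a * y c)) := by
            rw [sub_mul, smul_mul_assoc, one_mul, smul_mul_assoc, mul_assoc]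
        _ = (2 * B a b) • y c
            - μ a b • (y b * ((2 * B a c) • (1 : sCl 𝕜 n μ B) - μ a c • (y c * y a))) := by
            rw [hmul a c]
        _ = _ := by
            rw [mul_sub, mul_smul_comm, mul_one, mul_smul_comm, smul_sub, smul_smul, smul_smul]
            abel
    have rmul : y i * (y j * y k) + μ i j • (y j * (y i * y k)) = (2 * B i j) • y k := by
      have h := congrArg (fun z => z * y k) (rel i j)
      simpa [add_mul, smul_mul_assoc, one_mul, mul_assoc] using h
    have start : y k * (y i * y j) + μ i j • (y k * (y j * y i)) = (2 * B i j) • y k := by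
      have h : y k * (y i * y j + μ i j • (y j * y i))
          = y k * ((2 * B i j) • (1 : sCl 𝕜 n μ B)) := by rw [rel i j]
      rw [mul_add, mul_smul_comm, mul_smul_comm, mul_one] at h
      exact h
    rw [e1 k i j, e1 k j i] at start
    have hcube : y i * (y j * y k) = (2 * B i j) • y k - μ i j • (y j * (y i * y k)) :=
      eq_sub_iff_add_eq.2 rmul
    rw [hcube] at start
    have final : (2 * B i j * (1 - μ k i * μ k j)) • y k
        - (2 * B k j * (μ i j - μ k i)) • y i
        - (2 * B k i * (1 - μ i j * μ k j)) • y j = 0 := by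
      linear_combination (norm := module) (-1 : 𝕜) • start
    set v : Fin n → 𝕜 := (2 * B i j * (1 - μ k i * μ k j)) • (Pi.single k 1 : Fin n → 𝕜)
        - (2 * B k j * (μ i j - μ k i)) • (Pi.single i 1 : Fin n → 𝕜)
        - (2 * B k i * (1 - μ i j * μ k j)) • (Pi.single j 1 : Fin n → 𝕜) with hv
    have hgv : g v = 0 := by
      rw [hv]
      simp only [map_sub, map_smul, hg]
      exact final
    have hv0 : v = 0 := hinj (by rw [hgv, map_zero])
    have hvk := congrFun hv0 k
    simp only [hv, Pi.sub_apply, Pi.smul_apply, Pi.single_apply, smul_eq_mul,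
      Pi.zero_apply, if_true] at hvk
    by_cases hki : k = i
    · subst hki
      have hji : k ≠ j := fun h => hk (by rw [← h])
      rw [if_pos rfl, if_neg hji, mul_one, mul_one, mul_zero, sub_zero] at hvk
      rw [(hμ' k k).2] at hvk
      apply hk
      rw [(hμ' k k).2]
      have h4 : (2 : 𝕜) * 2 * B k j ≠ 0 := mul_ne_zero (mul_ne_zero hchar hchar) hBij
      apply mul_left_cancel₀ h4
      linear_combination hvk
    · by_cases hkj : k = j
      · subst hkj
        rw [if_neg hki, if_pos rfl, mul_one, mul_zero, sub_zero, mul_one] at hvk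
        rw [(hμ' k k).2] at hvk
        apply hk
        rw [(hμ' k k).2]
        have hBji : B k i ≠ 0 := Bop_ne hB' hBij
        have h4 : (2 : 𝕜) * 2 * B k i ≠ 0 := mul_ne_zero (mul_ne_zero hchar hchar) hBji
        apply mul_left_cancel₀ h4
        linear_combination hvk - (2 - 2 * μ k i) * (hB' i k) + (2 * B k i) * ((hμ' i k).1)
      · rw [if_neg hki, if_neg hkj, mul_zero, mul_zero, sub_zero, sub_zero, mul_one] at hvk
        apply hk
        apply mul_left_cancel₀ (hμne hμ' k i)
        rw [(hμ' k i).1]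
        have h2 : (2 : 𝕜) * B i j ≠ 0 := mul_ne_zero hchar hBij
        apply mul_left_cancel₀ h2
        linear_combination hvk
  · -- (★) → (injective)
    intro hstar
    have hstar' : ∀ i j, B i j ≠ 0 → ∀ k, μ i k = μ k j := hstar
    have key : ∀ c : Fin n → 𝕜, g c = 0 → c = 0 := by
      intro c hc
      set F : FreeAlgebra 𝕜 (Fin n) →ₐ[𝕜] Matrix (Finset (Fin n)) (Finset (Fin n)) 𝕜 :=
        FreeAlgebra.lift 𝕜 (fun a => Mm μ B a) with hF
      have hrel : ∀ ⦃x y : FreeAlgebra 𝕜 (Fin n)⦄, sClRel 𝕜 n μ B x y → F x = F y := by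
        rintro x y ⟨a, b⟩
        simp only [map_add, map_mul, map_smul, map_one, hF, FreeAlgebra.lift_ι_apply]
        exact Mrel hμ' hB' hstar' a b
      set φ := RingQuot.liftAlgHom 𝕜 (s := sClRel 𝕜 n μ B) ⟨F, hrel⟩ with hφ
      have hgen : ∀ a, φ (sClGen 𝕜 n μ B a) = Mm μ B a := by
        intro a
        rw [sClGen, hφ, RingQuot.liftAlgHom_mkAlgHom_apply, hF, FreeAlgebra.lift_ι_apply]
      have hsingle : ∀ a : Fin n, (fun j => if a = j then (1:𝕜) else 0) = Pi.single a 1 := by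
        intro a
        funext b
        rw [Pi.single_apply]
        by_cases h : a = b
        · rw [if_pos h, if_pos h.symm]
        · rw [if_neg h, if_neg (fun h' => h h'.symm)]
      have hgc : g c = ∑ a : Fin n, c a • sClGen 𝕜 n μ B a := by
        conv_lhs => rw [pi_eq_sum_univ c]
        rw [map_sum]
        refine Finset.sum_congr rfl fun a _ => ?_
        rw [map_smul, hsingle a, hg a]
      have hM0 : (∑ a : Fin n, c a • Mm μ B a) = 0 := by
        have h1 : φ (g c) = 0 := by rw [hc, map_zero]
        rw [hgc, map_sum] at h1
        simpa only [map_smul, hgen] using h1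
      funext a
      have h2 := congrFun (congrFun hM0 {a}) ∅
      have hMba : ∀ b, Mm μ B b {a} ∅ = if b = a then (1:𝕜) else 0 := by
        intro b
        have e0 : Mm μ B b {a} ∅ = Cm μ b {a} ∅ + Am μ B b {a} ∅ := rfl
        have e1 : Am μ B b {a} ∅ = 0 := by simp [Am]
        have e2 : Cm μ b {a} ∅ = if b = a then 1 else 0 := by
          by_cases h : b = a
          · subst h
            simp [Cm, Pl]
          · have hcond : ¬((b ∉ (∅ : Finset (Fin n))) ∧ ({a} : Finset (Fin n)) = insert b ∅) := by
              rintro ⟨-, hEq⟩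
              have hab : a = b := by simpa using hEq
              exact h hab.symm
            simp only [Cm, if_neg hcond, if_neg h]
        rw [e0, e1, e2, add_zero]
      simp only [Matrix.sum_apply, Matrix.smul_apply, smul_eq_mul, Matrix.zero_apply] at h2
      simp only [hMba, mul_ite, mul_one, mul_zero] at h2
      rwa [Finset.sum_ite_eq' Finset.univ a c, if_pos (Finset.mem_univ a)] at h2
    intro c₁ c₂ h12
    have hsub : c₁ - c₂ = 0 := key _ (by rw [map_sub, h12, sub_self])
    exact sub_eq_zero.1 hsub
end

section
/- The skew Clifford algebra sCl(μ, B) has 𝕜-vector-space dimension exactly 2^n if and only if condition (★) holds. (Theorem 3.10, equivalence (b) ⇔ (c).) -/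
open FreeAlgebra

/-!
The ordered monomials `x_S = x_{s₁} ⋯ x_{sᵣ}` (`s₁ < ⋯ < sᵣ`) always span `sCl(μ, B)`: the
relations `x_i x_j = 2 B i j - μ i j x_j x_i` and `x_i ^ 2 = B i i` sort any word. Hence the
dimension is `2 ^ n` exactly when they are linearly independent.

Under (★) they are: letting `x_i` act on the vector space with basis `e_S` through the normal form
of `x_i x_S` gives a representation in which `x_S • e_∅ = e_S`; the relations are checked on `e_S`
by induction on the minimum of `S`, and this is where (★) enters. Conversely, multiplying the
relation for `(i, j)` by `x_k` and moving `x_k` to the right gives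
`2 B i j (1 - μ k i μ k j) x_k ∈ span {x_i, x_j}`, so if (★) fails at `(i, j, k)` the generators
are linearly dependent.
-/

theorem LinearIndependent.eq_zero_of_smul_eq_smul_add_smul {K V ι : Type*} [Field K]
    [AddCommGroup V] [Module K V] {v : ι → V} (hv : LinearIndependent K v) {i j k : ι}
    (hki : k ≠ i) (hkj : k ≠ j) {a b c : K} (h : c • v k = a • v i + b • v j) : c = 0 := by
  by_contra hc
  refine hv.notMem_span_image (x := k) (s := {i, j}) (by simp [hki, hkj]) ?_
  rw [← inv_smul_smul₀ hc (v k), h]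
  exact Submodule.smul_mem _ _ (add_mem (Submodule.smul_mem _ _ (Submodule.subset_span (by simp)))
    (Submodule.smul_mem _ _ (Submodule.subset_span (by simp))))

theorem Finsupp.eqOn_supported_of_single {R α M : Type*} [Semiring R] [AddCommMonoid M]
    [Module R M] {s : Set α} {f g : (α →₀ R) →ₗ[R] M}
    (h : ∀ a ∈ s, f (single a 1) = g (single a 1)) :
    Set.EqOn f g (supported R R s) := by
  rw [supported_eq_span_single]
  exact LinearMap.eqOn_span' (Set.forall_mem_image.2 h)

theorem StarCond.mul_eq_mul {𝕜 : Type*} [Field 𝕜] {n : ℕ} {μ B : Fin n → Fin n → 𝕜}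
    (hstar : StarCond μ B) (i j k : Fin n) :
    B i j * μ i k = B i j * μ k j := by
  by_cases h : B i j = 0
  · simp [h]
  · rw [hstar i j h k]

namespace SkewClifford

open Finset Submodule

variable {𝕜 : Type*} [Field 𝕜] {n : ℕ} {μ B : Fin n → Fin n → 𝕜}

local notation "gen" => sClGen 𝕜 n μ B

theorem sClGen_mul_add_smul_mul (i j : Fin n) :
    gen i * gen j + μ i j • (gen j * gen i) = (2 * B i j) • (1 : sCl 𝕜 n μ B) := by
  simpa [sClGen] using RingQuot.mkAlgHom_rel 𝕜 (sClRel.rel (μ := μ) (B := B) i j)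

theorem sClGen_mul (i j : Fin n) :
    gen i * gen j = (2 * B i j) • (1 : sCl 𝕜 n μ B) - μ i j • (gen j * gen i) :=
  eq_sub_of_add_eq (sClGen_mul_add_smul_mul i j)

theorem sClGen_mul_self (hchar : (2 : 𝕜) ≠ 0) (hμ : MulAntisym μ) (i : Fin n) :
    gen i * gen i = B i i • (1 : sCl 𝕜 n μ B) := by
  have h := sClGen_mul_add_smul_mul (μ := μ) (B := B) i i
  rw [(hμ i i).2, one_smul, ← two_smul 𝕜, mul_smul] at h
  exact smul_right_injective _ hchar h

/-- Moving `x_k` across the relation `x_i x_j + μ i j x_j x_i = 2 B i j` from the left to the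
right leaves the same relation times `μ k i μ k j`, plus terms linear in `x_i` and `x_j`. -/
theorem sClGen_linear_relation (i j k : Fin n) :
    (2 * B i j * (1 - μ k i * μ k j)) • gen k =
      (2 * B k i * (1 - μ i j * μ k j)) • gen j + (2 * B k j * (μ i j - μ k i)) • gen i := by
  have hij := sClGen_mul_add_smul_mul (μ := μ) (B := B) i j
  have hki := sClGen_mul_add_smul_mul (μ := μ) (B := B) k i
  have hkj := sClGen_mul_add_smul_mul (μ := μ) (B := B) k j
  have e1 := congrArg (gen k * ·) hij
  have e2 := congrArg (· * gen j) hki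
  have e3 := congrArg (· * gen i) hkj
  have e4 := congrArg (gen i * ·) hkj
  have e5 := congrArg (gen j * ·) hki
  have e6 := congrArg (· * gen k) hij
  simp only [mul_add, add_mul, mul_smul_comm, smul_mul_assoc, mul_one, one_mul, mul_assoc]
    at e1 e2 e3 e4 e5 e6
  linear_combination (norm := module) e2 - e1 + μ i j • e3 - μ k i • e4 - (μ i j * μ k j) • e5
    + (μ k i * μ k j) • e6

variable (μ B) in
noncomputable def monomial (S : Finset (Fin n)) : sCl 𝕜 n μ B :=
  ((S.sort).map (sClGen 𝕜 n μ B)).prod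

@[simp]
theorem monomial_empty : monomial μ B (∅ : Finset (Fin n)) = 1 := by
  simp [monomial]

@[simp]
theorem monomial_singleton (i : Fin n) : monomial μ B {i} = gen i := by
  simp [monomial]

theorem monomial_insert_of_forall_lt {m : Fin n} {T : Finset (Fin n)} (hT : ∀ t ∈ T, m < t) :
    monomial μ B (insert m T) = gen m * monomial μ B T := by
  rw [monomial, sort_insert _ (fun t ht => (hT t ht).le) fun h => (hT m h).false]
  rfl

theorem sClGen_mul_monomial_mem_span (hchar : (2 : 𝕜) ≠ 0) (hμ : MulAntisym μ)
    (S : Finset (Fin n)) (i : Fin n) :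
    gen i * monomial μ B S ∈ span 𝕜 (monomial μ B '' {T | T ⊆ insert i S}) := by
  induction S using Finset.induction_on_min generalizing i with
  | empty => exact subset_span ⟨{i}, by simp, by simp⟩
  | insert m T hT ih =>
    rw [monomial_insert_of_forall_lt hT]
    rcases lt_trichotomy i m with him | rfl | hmi
    · have hiT : ∀ t ∈ insert m T, i < t := by
        simpa using ⟨him, fun t ht => him.trans (hT t ht)⟩
      rw [← monomial_insert_of_forall_lt hT, ← monomial_insert_of_forall_lt hiT]
      exact subset_span ⟨_, Subset.refl _, rfl⟩
    · rw [← mul_assoc, sClGen_mul_self hchar hμ, smul_mul_assoc, one_mul]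
      exact smul_mem _ _ (subset_span ⟨T, by grind, rfl⟩)
    · have hmul : span 𝕜 (monomial μ B '' {U | U ⊆ insert i T}) ≤
          (span 𝕜 (monomial μ B '' {U | U ⊆ insert i (insert m T)})).comap
            (LinearMap.mulLeft 𝕜 (gen m)) := by
        refine span_le.2 ?_
        rintro _ ⟨U, hU, rfl⟩
        have hmU : ∀ u ∈ U, m < u := fun u hu => by
          rcases mem_insert.1 (hU hu) with rfl | hu
          exacts [hmi, hT u hu]
        refine subset_span ⟨insert m U, ?_, monomial_insert_of_forall_lt hmU⟩
        grind
      rw [← mul_assoc, sClGen_mul, sub_mul, smul_mul_assoc, one_mul, smul_mul_assoc, mul_assoc]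
      exact sub_mem (smul_mem _ _ (subset_span ⟨T, by grind, rfl⟩)) (smul_mem _ _ (hmul (ih i)))

theorem span_range_monomial_eq_top (hchar : (2 : 𝕜) ≠ 0) (hμ : MulAntisym μ) :
    span 𝕜 (Set.range (monomial μ B)) = ⊤ := by
  set W := span 𝕜 (Set.range (monomial μ B))
  have hgen : ∀ i, ∀ w ∈ W, gen i * w ∈ W := fun i w hw => by
    refine span_induction (fun _ ⟨S, hS⟩ => ?_) (by simp) (fun _ _ _ _ h h' => ?_)
      (fun c _ _ h => ?_) hw
    · exact span_mono (Set.image_subset_range _ _) (hS ▸ sClGen_mul_monomial_mem_span hchar hμ S i)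
    · rw [mul_add]; exact add_mem h h'
    · rw [mul_smul_comm]; exact smul_mem _ c h
  rw [eq_top_iff]
  rintro a -
  obtain ⟨p, rfl⟩ := RingQuot.mkAlgHom_surjective 𝕜 (sClRel 𝕜 n μ B) a
  suffices ∀ w ∈ W, RingQuot.mkAlgHom 𝕜 (sClRel 𝕜 n μ B) p * w ∈ W by
    simpa using this 1 (subset_span ⟨∅, monomial_empty⟩)
  induction p using FreeAlgebra.induction with
  | grade0 r => exact fun w hw => by simpa [Algebra.smul_def] using smul_mem W r hw
  | grade1 i => exact hgen i
  | mul p q hp hq => exact fun w hw => by rw [map_mul, mul_assoc]; exact hp _ (hq w hw)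
  | add p q hp hq => exact fun w hw => by rw [map_add, add_mul]; exact add_mem (hp w hw) (hq w hw)

theorem finrank_eq_two_pow_iff_linearIndependent (hchar : (2 : 𝕜) ≠ 0) (hμ : MulAntisym μ) :
    Module.finrank 𝕜 (sCl 𝕜 n μ B) = 2 ^ n ↔ LinearIndependent 𝕜 (monomial μ B) := by
  rw [linearIndependent_iff_card_eq_finrank_span, Set.finrank, span_range_monomial_eq_top hchar hμ,
    finrank_top, Fintype.card_finset, Fintype.card_fin, eq_comm]

theorem starCond_of_linearIndependent (hchar : (2 : 𝕜) ≠ 0) (hμ : MulAntisym μ)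
    (hv : LinearIndependent 𝕜 (sClGen 𝕜 n μ B)) : StarCond μ B := by
  have hμ_eq_one : ∀ i j, B i j ≠ 0 → μ i j = 1 := by
    intro i j hBij
    rcases eq_or_ne i j with rfl | hij
    · exact (hμ i i).2
    have h := sClGen_linear_relation (μ := μ) (B := B) i j i
    rw [(hμ i i).2] at h
    have h' : (2 * 2 * B i j * (1 - μ i j)) • gen i =
        (2 * B i i * (1 - μ i j * μ i j)) • gen j + (0 : 𝕜) • gen j := by
      linear_combination (norm := module) h
    have := hv.eq_zero_of_smul_eq_smul_add_smul hij hij h'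
    simp only [mul_eq_zero, hchar, hBij, false_or, sub_eq_zero] at this
    exact this.symm
  intro i j hBij k
  have hμij := hμ_eq_one i j hBij
  rcases eq_or_ne k i with rfl | hki
  · rw [(hμ k k).2, hμij]
  rcases eq_or_ne k j with rfl | hkj
  · rw [(hμ k k).2, hμij]
  have := hv.eq_zero_of_smul_eq_smul_add_smul hkj hki (sClGen_linear_relation i j k)
  simp only [mul_eq_zero, hchar, hBij, false_or, sub_eq_zero] at this
  linear_combination μ i k * this + μ k j * (hμ i k).1

open Finsupp

variable (μ B) in
/-- `genActionList μ B i L` is `x_i · x_{s₁} ⋯ x_{sᵣ}` for `L = [s₁, …, sᵣ]` increasing, written in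
the basis `single S 1` of ordered monomials: `x_i` moves right past the `s < i`, each time using
the relation `x_i x_s = 2 B i s - μ i s x_s x_i`. -/
noncomputable def genActionList (i : Fin n) : List (Fin n) → (Finset (Fin n) →₀ 𝕜)
  | [] => single {i} 1
  | s :: L =>
    if s < i then
      (2 * B i s) • single L.toFinset 1 - μ i s • lmapDomain 𝕜 𝕜 (insert s) (genActionList i L)
    else if s = i then B i i • single L.toFinset 1
    else single (insert i (insert s L.toFinset)) 1

variable (μ B) in
noncomputable def genAction (i : Fin n) : Module.End 𝕜 (Finset (Fin n) →₀ 𝕜) :=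
  linearCombination 𝕜 fun S => genActionList μ B i S.sort

variable (𝕜) in
def supportedAbove (m : Fin n) : Submodule 𝕜 (Finset (Fin n) →₀ 𝕜) :=
  supported 𝕜 𝕜 {T | ∀ t ∈ T, m < t}

local notation "ins" m => lmapDomain 𝕜 𝕜 (insert m)

theorem genAction_single (i : Fin n) (S : Finset (Fin n)) :
    genAction μ B i (single S 1) = genActionList μ B i S.sort := by
  simp [genAction]

theorem genAction_single_of_forall_lt {i : Fin n} {T : Finset (Fin n)} (hT : ∀ t ∈ T, i < t) :
    genAction μ B i (single T 1) = single (insert i T) 1 := by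
  rw [genAction_single]
  have hL : ∀ s ∈ T.sort, i < s := by simpa using hT
  have hT' : T = T.sort.toFinset := (T.sort_toFinset _).symm
  generalize T.sort = L at hL hT'
  subst hT'
  cases L with
  | nil => simp [genActionList]
  | cons s L =>
    have his := hL s List.mem_cons_self
    simp [genActionList, his.not_gt, his.ne']

theorem genAction_single_insert_self {i : Fin n} {T : Finset (Fin n)} (hT : ∀ t ∈ T, i < t) :
    genAction μ B i (single (insert i T) 1) = B i i • single T 1 := by
  rw [genAction_single, sort_insert _ (fun t ht => (hT t ht).le) fun h => (hT i h).false,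
    genActionList, if_neg (lt_irrefl i), if_pos rfl, sort_toFinset]

theorem genAction_single_insert_of_lt {i m : Fin n} {T : Finset (Fin n)} (hmi : m < i)
    (hT : ∀ t ∈ T, m < t) :
    genAction μ B i (single (insert m T) 1) =
      (2 * B i m) • single T 1 - μ i m • (ins m) (genAction μ B i (single T 1)) := by
  rw [genAction_single, genAction_single,
    sort_insert _ (fun t ht => (hT t ht).le) fun h => (hT m h).false, genActionList, if_pos hmi,
    sort_toFinset]

theorem lmapDomain_insert_mem_supportedAbove {m s : Fin n} (hms : m < s)
    {v : Finset (Fin n) →₀ 𝕜} (hv : v ∈ supportedAbove 𝕜 m) : (ins s) v ∈ supportedAbove 𝕜 m := by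
  refine supported_comap_lmapDomain 𝕜 𝕜 _ _ (supported_mono ?_ hv)
  intro T hT t ht
  rcases mem_insert.1 ht with rfl | ht
  exacts [hms, hT t ht]

theorem genAction_mem_supportedAbove {i m : Fin n} (hmi : m < i) {v : Finset (Fin n) →₀ 𝕜}
    (hv : v ∈ supportedAbove 𝕜 m) : genAction μ B i v ∈ supportedAbove 𝕜 m := by
  suffices ∀ L : List (Fin n), (∀ t ∈ L, m < t) → genActionList μ B i L ∈ supportedAbove 𝕜 m by
    rw [supportedAbove, supported_eq_span_single] at hv
    refine (span_le (p := (supportedAbove 𝕜 m).comap (genAction μ B i))).2 ?_ hv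
    rintro _ ⟨T, hT, rfl⟩
    rw [SetLike.mem_coe, mem_comap, genAction_single]
    exact this _ (by simpa using hT)
  intro L hL
  induction L with
  | nil => exact single_mem_supported 𝕜 _ (by simpa using hmi)
  | cons s L ih =>
    have hL' : ∀ t ∈ L, m < t := fun t ht => hL t (List.mem_cons_of_mem s ht)
    have hLm : L.toFinset ∈ {T : Finset (Fin n) | ∀ t ∈ T, m < t} := by simpa using hL'
    have hms := hL s List.mem_cons_self
    unfold genActionList
    split_ifs
    · exact sub_mem (smul_mem _ _ (single_mem_supported 𝕜 _ hLm))
        (smul_mem _ _ (lmapDomain_insert_mem_supportedAbove hms (ih hL')))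
    · exact smul_mem _ _ (single_mem_supported 𝕜 _ hLm)
    · refine single_mem_supported 𝕜 _ ?_
      simpa [hmi, hms] using hL'

theorem genAction_lmapDomain_insert_of_lt {i m : Fin n} (hmi : m < i)
    {v : Finset (Fin n) →₀ 𝕜} (hv : v ∈ supportedAbove 𝕜 m) :
    genAction μ B i ((ins m) v) = (2 * B i m) • v - μ i m • (ins m) (genAction μ B i v) :=
  eqOn_supported_of_single (f := genAction μ B i ∘ₗ (ins m))
    (g := (2 * B i m) • LinearMap.id - μ i m • (ins m) ∘ₗ genAction μ B i)
    (fun T hT => by simpa using genAction_single_insert_of_lt (μ := μ) (B := B) hmi hT) hv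

theorem genAction_lmapDomain_insert_self {i : Fin n} {v : Finset (Fin n) →₀ 𝕜}
    (hv : v ∈ supportedAbove 𝕜 i) : genAction μ B i ((ins i) v) = B i i • v :=
  eqOn_supported_of_single (f := genAction μ B i ∘ₗ (ins i)) (g := B i i • LinearMap.id)
    (fun T hT => by simpa using genAction_single_insert_self (μ := μ) (B := B) hT) hv

theorem genAction_eq_lmapDomain_insert {i : Fin n} {v : Finset (Fin n) →₀ 𝕜}
    (hv : v ∈ supportedAbove 𝕜 i) : genAction μ B i v = (ins i) v :=
  eqOn_supported_of_single (f := genAction μ B i) (g := ins i)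
    (fun T hT => by simpa using genAction_single_of_forall_lt (μ := μ) (B := B) hT) hv

theorem genAction_rel_single_insert_of_lt (hμ : MulAntisym μ) (hstar : StarCond μ B)
    {i j m : Fin n} {T : Finset (Fin n)} (hmi : m < i) (hmj : m < j) (hT : ∀ t ∈ T, m < t)
    (ih : genAction μ B i (genAction μ B j (single T 1)) +
      μ i j • genAction μ B j (genAction μ B i (single T 1)) = (2 * B i j) • single T 1) :
    genAction μ B i (genAction μ B j (single (insert m T) 1)) +
      μ i j • genAction μ B j (genAction μ B i (single (insert m T) 1)) =
        (2 * B i j) • single (insert m T) 1 := by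
  have hTm : single T (1 : 𝕜) ∈ supportedAbove 𝕜 m := single_mem_supported 𝕜 _ hT
  rw [genAction_single_insert_of_lt hmj hT, genAction_single_insert_of_lt hmi hT]
  simp only [map_sub, map_smul]
  rw [genAction_lmapDomain_insert_of_lt hmi (genAction_mem_supportedAbove hmj hTm),
    genAction_lmapDomain_insert_of_lt hmj (genAction_mem_supportedAbove hmi hTm)]
  have ih' := congrArg (ins m) ih
  simp only [map_add, map_smul, lmapDomain_apply, mapDomain_single] at ih' ⊢
  have s1 : B i j * μ i m * μ j m = B i j := by
    linear_combination μ j m * hstar.mul_eq_mul i j m + B i j * (hμ m j).1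
  have s2 := hstar.mul_eq_mul i m j
  have s3 : B j m * μ i j * μ i m = B j m := by
    linear_combination -μ i j * hstar.mul_eq_mul j m i + B j m * (hμ i j).1
  linear_combination (norm := module) (μ i m * μ j m) • ih' + (2 * s1) • single (insert m T) 1
    + (2 * s2) • genAction μ B j (single T 1) - (2 * s3) • genAction μ B i (single T 1)

theorem genAction_rel_single_of_le (hμ : MulAntisym μ) (hB : MuSymm μ B) (hstar : StarCond μ B)
    {i j : Fin n} {S : Finset (Fin n)} (hij : i ≤ j) (hS : ∀ s ∈ S, i ≤ s) :
    genAction μ B i (genAction μ B j (single S 1)) +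
      μ i j • genAction μ B j (genAction μ B i (single S 1)) = (2 * B i j) • single S 1 := by
  by_cases hiS : i ∈ S
  · obtain ⟨T, hT, rfl⟩ : ∃ T, (∀ t ∈ T, i < t) ∧ S = insert i T :=
      ⟨S.erase i, fun t ht => lt_of_le_of_ne (hS t (mem_of_mem_erase ht)) (ne_of_mem_erase ht).symm,
        (insert_erase hiS).symm⟩
    rcases hij.eq_or_lt with rfl | hij
    · rw [genAction_single_insert_self hT, map_smul, genAction_single_of_forall_lt hT, (hμ i i).2]
      module
    have hTi : single T (1 : 𝕜) ∈ supportedAbove 𝕜 i := single_mem_supported 𝕜 _ hT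
    rw [genAction_single_insert_of_lt hij hT, genAction_single_insert_self hT]
    simp only [map_sub, map_smul]
    rw [genAction_lmapDomain_insert_self (genAction_mem_supportedAbove hij hTi),
      genAction_single_of_forall_lt hT]
    have hBji : B j i = B i j := by
      linear_combination -hB i j - B j i * (hμ i j).1 + μ i j * hstar.mul_eq_mul j i i
        + μ i j * B j i * (hμ i i).2
    linear_combination (norm := module) (2 * hBji) • single (insert i T) (1 : 𝕜)
      + hstar.mul_eq_mul i i j • genAction μ B j (single T 1)
  · have hSi : ∀ s ∈ S, i < s := fun s hs =>
      lt_of_le_of_ne (hS s hs) (ne_of_mem_of_not_mem hs hiS).symm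
    rcases hij.eq_or_lt with rfl | hij
    · rw [genAction_single_of_forall_lt hSi, genAction_single_insert_self hSi, (hμ i i).2]
      module
    have hSi' : single S (1 : 𝕜) ∈ supportedAbove 𝕜 i := single_mem_supported 𝕜 _ hSi
    rw [genAction_eq_lmapDomain_insert (genAction_mem_supportedAbove hij hSi'),
      genAction_single_of_forall_lt hSi, genAction_single_insert_of_lt hij hSi]
    linear_combination (norm := module) -(2 * hB i j) • single S (1 : 𝕜)
      - (hμ i j).1 • (ins i) (genAction μ B j (single S 1))

theorem genAction_rel_single (hμ : MulAntisym μ) (hB : MuSymm μ B) (hstar : StarCond μ B)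
    (i j : Fin n) (S : Finset (Fin n)) :
    genAction μ B i (genAction μ B j (single S 1)) +
      μ i j • genAction μ B j (genAction μ B i (single S 1)) = (2 * B i j) • single S 1 := by
  wlog hij : i ≤ j generalizing i j
  · linear_combination (norm := module) μ i j • this j i (le_of_not_ge hij)
      - (hμ i j).1 • genAction μ B i (genAction μ B j (single S 1)) - (2 * hB i j) • single S 1
  induction S using Finset.induction_on_min with
  | empty => exact genAction_rel_single_of_le hμ hB hstar hij (by simp)
  | insert m T hT ih =>
    rcases lt_or_ge m i with hmi | him
    · exact genAction_rel_single_insert_of_lt hμ hstar hmi (hmi.trans_le hij) hT ih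
    · refine genAction_rel_single_of_le hμ hB hstar hij fun s hs => ?_
      rcases mem_insert.1 hs with rfl | hs
      exacts [him, him.trans (hT s hs).le]

theorem genAction_mul_add_smul_mul (hμ : MulAntisym μ) (hB : MuSymm μ B) (hstar : StarCond μ B)
    (i j : Fin n) :
    genAction μ B i * genAction μ B j + μ i j • (genAction μ B j * genAction μ B i) =
      (2 * B i j) • 1 :=
  Finsupp.basisSingleOne.ext fun S => by
    simpa using genAction_rel_single hμ hB hstar i j S

variable (μ B) in
noncomputable def toEnd (hμ : MulAntisym μ) (hB : MuSymm μ B) (hstar : StarCond μ B) :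
    sCl 𝕜 n μ B →ₐ[𝕜] Module.End 𝕜 (Finset (Fin n) →₀ 𝕜) :=
  RingQuot.liftAlgHom 𝕜 ⟨FreeAlgebra.lift 𝕜 (genAction μ B), by
    rintro _ _ ⟨i, j⟩
    simpa using genAction_mul_add_smul_mul hμ hB hstar i j⟩

theorem toEnd_monomial_single_empty (hμ : MulAntisym μ) (hB : MuSymm μ B) (hstar : StarCond μ B)
    (S : Finset (Fin n)) : toEnd μ B hμ hB hstar (monomial μ B S) (single ∅ 1) = single S 1 := by
  induction S using Finset.induction_on_min with
  | empty => simp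
  | insert m T hT ih =>
    rw [monomial_insert_of_forall_lt hT, map_mul, Module.End.mul_apply, ih, toEnd, sClGen,
      RingQuot.liftAlgHom_mkAlgHom_apply]
    simpa using genAction_single_of_forall_lt hT

theorem linearIndependent_monomial (hμ : MulAntisym μ) (hB : MuSymm μ B) (hstar : StarCond μ B) :
    LinearIndependent 𝕜 (monomial μ B) := by
  refine LinearIndependent.of_comp
    (LinearMap.applyₗ (single ∅ 1) ∘ₗ (toEnd μ B hμ hB hstar).toLinearMap) ?_
  convert (Finsupp.basisSingleOne (R := 𝕜) (ι := Finset (Fin n))).linearIndependent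
  funext S
  exact toEnd_monomial_single_empty hμ hB hstar S

end SkewClifford

theorem skewClifford_finrank_eq_iff_starCond_general
    (𝕜 : Type*) [Field 𝕜] (hchar : (2 : 𝕜) ≠ 0) (n : ℕ)
    (μ B : Fin n → Fin n → 𝕜) (hμ : MulAntisym μ) (hB : MuSymm μ B) :
    Module.finrank 𝕜 (sCl 𝕜 n μ B) = 2 ^ n ↔ StarCond μ B := by
  rw [SkewClifford.finrank_eq_two_pow_iff_linearIndependent hchar hμ]
  refine ⟨fun h => SkewClifford.starCond_of_linearIndependent hchar hμ ?_,
    SkewClifford.linearIndependent_monomial hμ hB⟩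
  simpa [Function.comp_def] using h.comp _ (Finset.singleton_injective (α := Fin n))

/-- Theorem 3.10 (b) ⇔ (c): `sCl(μ, B)` has dimension exactly `2 ^ n` iff condition (★)
holds. -/
theorem skewClifford_finrank_eq_iff_starCond
    (𝕜 : Type*) [Field 𝕜] (hchar : (2 : 𝕜) ≠ 0) (n : ℕ) (hn : 1 ≤ n)
    (μ B : Fin n → Fin n → 𝕜) (hμ : MulAntisym μ) (hB : MuSymm μ B) :
    Module.finrank 𝕜 (sCl 𝕜 n μ B) = 2 ^ n ↔ StarCond μ B :=
  skewClifford_finrank_eq_iff_starCond_general 𝕜 hchar n μ B hμ hB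
end

section
/- In the skew polynomial ring S_μ, the element q = Σ_{i,j} (B i j) • z̄_i z̄_j lies in the center of S_μ if and only if condition (★) holds. (Theorem 3.10, equivalence (c) ⇔ (d).) -/
open FreeAlgebra

/-- The defining relations of the skew polynomial ring `S_μ` (the Koszul dual of the
quantum exterior algebra): `z_i z_j = μ j i • (z_j z_i)`. -/
inductive SkewPolyRel (𝕜 : Type*) [Field 𝕜] (n : ℕ) (μ : Fin n → Fin n → 𝕜) :
    FreeAlgebra 𝕜 (Fin n) → FreeAlgebra 𝕜 (Fin n) → Prop
  | rel (i j : Fin n) : SkewPolyRel 𝕜 n μ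
      (ι 𝕜 i * ι 𝕜 j) (μ j i • (ι 𝕜 j * ι 𝕜 i))

/-- The skew polynomial ring `S_μ`. -/
abbrev SkewPoly (𝕜 : Type*) [Field 𝕜] (n : ℕ) (μ : Fin n → Fin n → 𝕜) : Type _ :=
  RingQuot (SkewPolyRel 𝕜 n μ)

/-- The image `z̄_i` of the generator `z_i` in the skew polynomial ring. -/
noncomputable def skewPolyGen (𝕜 : Type*) [Field 𝕜] (n : ℕ) (μ : Fin n → Fin n → 𝕜)
    (i : Fin n) : SkewPoly 𝕜 n μ :=
  RingQuot.mkAlgHom 𝕜 (SkewPolyRel 𝕜 n μ) (ι 𝕜 i)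

namespace SkewAux
variable {𝕜 : Type*} [Field 𝕜] {n : ℕ}

def nu (μ : Fin n → Fin n → 𝕜) (j i : Fin n) : 𝕜 := if j ≤ i then μ j i else 1

def dl (k : Fin n) : Fin n → ℕ := Pi.single k 1

theorem nu_rel {μ : Fin n → Fin n → 𝕜} (hμ : MulAntisym μ) (i j : Fin n) :
    nu μ j i = μ j i * nu μ i j := by
  unfold nu
  rcases le_or_gt j i with h | h
  · rcases eq_or_lt_of_le h with rfl | h'
    · simp [(hμ j j).2]
    · rw [if_pos h, if_neg (not_le.2 h'), mul_one]
  · rw [if_neg (not_le.2 h), if_pos h.le]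
    exact ((hμ j i).1).symm

theorem mu_ne_zero {μ : Fin n → Fin n → 𝕜} (hμ : MulAntisym μ) (i j : Fin n) : μ i j ≠ 0 := by
  intro h
  have := (hμ i j).1
  rw [h, zero_mul] at this
  exact one_ne_zero this.symm

theorem nu_ne_zero {μ : Fin n → Fin n → 𝕜} (hμ : MulAntisym μ) (i j : Fin n) : nu μ i j ≠ 0 := by
  unfold nu; split
  · exact mu_ne_zero hμ i j
  · exact one_ne_zero

theorem dl_eq_iff {i j i' j' : Fin n} :
    dl i' + dl j' = dl i + dl j ↔ (i' = i ∧ j' = j) ∨ (i' = j ∧ j' = i) := by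
  constructor
  · intro h
    have h1 := congrFun h i'
    have h2 := congrFun h j'
    have h3 := congrFun h i
    have h4 := congrFun h j
    simp only [Pi.add_apply, dl, Pi.single_apply] at h1 h2 h3 h4
    by_cases e1 : i' = i <;> by_cases e2 : i' = j <;> by_cases e3 : j' = i <;>
      by_cases e4 : j' = j <;> simp_all
  · rintro (⟨rfl, rfl⟩ | ⟨rfl, rfl⟩)
    · rfl
    · exact add_comm _ _


noncomputable def cf (μ : Fin n → Fin n → 𝕜) (i : Fin n) (a : Fin n → ℕ) : 𝕜 :=
  ∏ j, nu μ j i ^ a j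

theorem cf_add (μ : Fin n → Fin n → 𝕜) (i : Fin n) (a b : Fin n → ℕ) :
    cf μ i (a + b) = cf μ i a * cf μ i b := by
  simp [cf, pow_add, Finset.prod_mul_distrib]

theorem cf_zero (μ : Fin n → Fin n → 𝕜) (i : Fin n) : cf μ i 0 = 1 := by simp [cf]

theorem cf_dl (μ : Fin n → Fin n → 𝕜) (i k : Fin n) : cf μ i (dl k) = nu μ k i := by
  simp [cf, dl, Pi.single_apply, pow_ite, Finset.prod_ite_eq']

theorem cf_ne_zero {μ : Fin n → Fin n → 𝕜} (hμ : MulAntisym μ) (i : Fin n) (a : Fin n → ℕ) :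
    cf μ i a ≠ 0 :=
  Finset.prod_ne_zero_iff.2 fun j _ => pow_ne_zero _ (nu_ne_zero hμ j i)

abbrev V (𝕜 : Type*) [Field 𝕜] (n : ℕ) : Type _ := (Fin n → ℕ) →₀ 𝕜

noncomputable def T (μ : Fin n → Fin n → 𝕜) (i : Fin n) : V 𝕜 n →ₗ[𝕜] V 𝕜 n :=
  Finsupp.lsum 𝕜 fun a => cf μ i a • Finsupp.lsingle (a + dl i)

theorem T_single (μ : Fin n → Fin n → 𝕜) (i : Fin n) (a : Fin n → ℕ) (r : 𝕜) :
    T μ i (Finsupp.single a r) = Finsupp.single (a + dl i) (cf μ i a * r) := by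
  simp [T, Finsupp.smul_single]

theorem T_rel {μ : Fin n → Fin n → 𝕜} (hμ : MulAntisym μ) (i j : Fin n) :
    (T μ i : Module.End 𝕜 (V 𝕜 n)) * T μ j = μ j i • (T μ j * T μ i) := by
  apply Finsupp.lhom_ext
  intro a r
  show T μ i (T μ j (Finsupp.single a r)) = μ j i • T μ j (T μ i (Finsupp.single a r))
  rw [T_single, T_single, T_single, T_single, Finsupp.smul_single]
  congr 1
  · rw [add_assoc, add_assoc, add_comm (dl j) (dl i)]
  · rw [cf_add, cf_add, cf_dl, cf_dl, nu_rel hμ j i, smul_eq_mul]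
    linear_combination (-(cf μ i a * nu μ j i * cf μ j a * r)) * (hμ j i).1

variable (𝕜) in
noncomputable def psi (n : ℕ) {μ : Fin n → Fin n → 𝕜} (hμ : MulAntisym μ) :
    SkewPoly 𝕜 n μ →ₐ[𝕜] Module.End 𝕜 (V 𝕜 n) :=
  RingQuot.liftAlgHom 𝕜 ⟨FreeAlgebra.lift 𝕜 (T μ), by
    rintro x y ⟨i, j⟩
    simp only [map_mul, map_smul, FreeAlgebra.lift_ι_apply]
    exact T_rel hμ i j⟩

theorem psi_gen {μ : Fin n → Fin n → 𝕜} (hμ : MulAntisym μ) (i : Fin n) :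
    psi 𝕜 n hμ (skewPolyGen 𝕜 n μ i) = T μ i := by
  simp [psi, skewPolyGen, RingQuot.liftAlgHom_mkAlgHom_apply]


theorem gen_comm (μ : Fin n → Fin n → 𝕜) (i j : Fin n) :
    skewPolyGen 𝕜 n μ i * skewPolyGen 𝕜 n μ j
      = μ j i • (skewPolyGen 𝕜 n μ j * skewPolyGen 𝕜 n μ i) := by
  have h := RingQuot.mkAlgHom_rel 𝕜 (SkewPolyRel.rel i j (𝕜 := 𝕜) (n := n) (μ := μ))
  simpa [skewPolyGen, map_mul, map_smul] using h

theorem central_of_star {μ B : Fin n → Fin n → 𝕜} (hμ : MulAntisym μ) (hstar : StarCond μ B) :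
    (∑ i, ∑ j, B i j • (skewPolyGen 𝕜 n μ i * skewPolyGen 𝕜 n μ j))
      ∈ Set.center (SkewPoly 𝕜 n μ) := by
  rw [Semigroup.mem_center_iff]
  set q := ∑ i, ∑ j, B i j • (skewPolyGen 𝕜 n μ i * skewPolyGen 𝕜 n μ j) with hq
  have key : ∀ k, skewPolyGen 𝕜 n μ k * q = q * skewPolyGen 𝕜 n μ k := by
    intro k
    rw [hq, Finset.mul_sum, Finset.sum_mul]
    refine Finset.sum_congr rfl fun i _ => ?_
    rw [Finset.mul_sum, Finset.sum_mul]
    refine Finset.sum_congr rfl fun j _ => ?_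
    rcases eq_or_ne (B i j) 0 with hb | hb
    · simp [hb]
    have h1 : μ i k = μ k j := hstar i j hb k
    have h2 : skewPolyGen 𝕜 n μ k * (skewPolyGen 𝕜 n μ i * skewPolyGen 𝕜 n μ j)
        = (μ i k * μ j k) • (skewPolyGen 𝕜 n μ i * skewPolyGen 𝕜 n μ j * skewPolyGen 𝕜 n μ k) := by
      rw [← mul_assoc, gen_comm μ k i, smul_mul_assoc, mul_assoc, gen_comm μ k j,
        mul_smul_comm, smul_smul, mul_assoc]
    rw [mul_smul_comm, smul_mul_assoc, h2, smul_smul]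
    congr 1
    rw [h1, (hμ k j).1, mul_one]
  intro g
  obtain ⟨x, rfl⟩ := RingQuot.mkAlgHom_surjective 𝕜 (SkewPolyRel 𝕜 n μ) g
  induction x using FreeAlgebra.induction with
  | grade0 r => rw [AlgHom.commutes]; exact Algebra.commutes r q
  | grade1 i => exact key i
  | mul x y hx hy => rw [map_mul, mul_assoc, hy, ← mul_assoc, hx, mul_assoc]
  | add x y hx hy => rw [map_add, add_mul, mul_add, hx, hy]


theorem key_sum_ne (f : Fin n → Fin n → 𝕜) {i j : Fin n} (hij : i ≠ j) :
    (∑ i', ∑ j', if dl i' + dl j' = dl i + dl j then f i' j' else 0) = f i j + f j i := by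
  simp only [dl_eq_iff]
  have hsplit : ∀ i' j' : Fin n,
      (if (i' = i ∧ j' = j) ∨ (i' = j ∧ j' = i) then f i' j' else 0)
        = (if i' = i ∧ j' = j then f i' j' else 0) + (if i' = j ∧ j' = i then f i' j' else 0) := by
    intro i' j'
    by_cases h1 : i' = i ∧ j' = j
    · obtain ⟨rfl, rfl⟩ := h1
      have h2 : ¬(i' = j' ∧ j' = i') := fun h => hij h.1
      simp [h2]
    · by_cases h2 : i' = j ∧ j' = i
      · obtain ⟨rfl, rfl⟩ := h2
        simp [h1]
      · simp [h1, h2]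
  simp only [hsplit, Finset.sum_add_distrib]
  congr 1 <;> simp [ite_and, Finset.sum_ite_eq]

theorem key_sum_diag (f : Fin n → Fin n → 𝕜) (i : Fin n) :
    (∑ i', ∑ j', if dl i' + dl j' = dl i + dl i then f i' j' else 0) = f i i := by
  simp only [dl_eq_iff, or_self]
  simp [ite_and, Finset.sum_ite_eq]


theorem star_of_central {μ B : Fin n → Fin n → 𝕜} (hchar : (2:𝕜) ≠ 0) (hμ : MulAntisym μ) (hB : MuSymm μ B)
    (hc : (∑ i, ∑ j, B i j • (skewPolyGen 𝕜 n μ i * skewPolyGen 𝕜 n μ j))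
      ∈ Set.center (SkewPoly 𝕜 n μ)) : StarCond μ B := by
  intro i j hBij k
  set q := ∑ i, ∑ j, B i j • (skewPolyGen 𝕜 n μ i * skewPolyGen 𝕜 n μ j) with hq
  have hz : skewPolyGen 𝕜 n μ k * q = q * skewPolyGen 𝕜 n μ k :=
    Semigroup.mem_center_iff.mp hc _
  have E : (psi 𝕜 n hμ (skewPolyGen 𝕜 n μ k * q)) (Finsupp.single 0 1) (dl i + dl j + dl k)
       = (psi 𝕜 n hμ (q * skewPolyGen 𝕜 n μ k)) (Finsupp.single 0 1) (dl i + dl j + dl k) := by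
    rw [hz]
  simp only [hq, map_mul, map_sum, map_smul, psi_gen, Module.End.mul_apply, LinearMap.sum_apply,
    LinearMap.smul_apply, T_single, zero_add, cf_zero, one_mul, mul_one, Finsupp.smul_single,
    cf_add, cf_dl, Finsupp.finset_sum_apply, Finsupp.single_apply, smul_eq_mul] at E
  have c1 : ∀ x x1 : Fin n, (dl x1 + dl x + dl k = dl i + dl j + dl k)
      ↔ (dl x + dl x1 = dl i + dl j) := by
    intro x x1
    rw [show dl x1 + dl x + dl k = (dl x + dl x1) + dl k from by abel, add_left_inj]
  have c2 : ∀ x x1 : Fin n, (dl k + dl x1 + dl x = dl i + dl j + dl k)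
      ↔ (dl x + dl x1 = dl i + dl j) := by
    intro x x1
    rw [show dl k + dl x1 + dl x = (dl x + dl x1) + dl k from by abel, add_left_inj]
  simp only [c1, c2] at E
  rcases eq_or_ne i j with rfl | hij
  · rw [key_sum_diag, key_sum_diag] at E
    have hnuii : nu μ i i = 1 := by simp [nu, (hμ i i).2]
    rw [hnuii, nu_rel hμ i k] at E
    have hsq : μ k i * μ k i = 1 := by
      have hne : nu μ i k * nu μ i k * B i i ≠ 0 :=
        mul_ne_zero (mul_ne_zero (nu_ne_zero hμ i k) (nu_ne_zero hμ i k)) hBij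
      apply mul_right_cancel₀ hne
      linear_combination -E
    have h4 := (hμ i k).1
    apply mul_right_cancel₀ (mu_ne_zero hμ k i)
    linear_combination h4 - hsq
  · rw [key_sum_ne _ hij, key_sum_ne _ hij] at E
    have hBji : B i j * nu μ j i = B j i * nu μ i j := by
      linear_combination (nu μ j i) * (hB i j) + (μ i j * B j i) * (nu_rel hμ i j)
        + (B j i * nu μ i j) * (hμ i j).1
    have E2 : nu μ j k * nu μ i k = nu μ k i * nu μ k j := by
      have h2 : (2:𝕜) * B i j * nu μ j i ≠ 0 :=
        mul_ne_zero (mul_ne_zero hchar hBij) (nu_ne_zero hμ j i)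
      apply mul_right_cancel₀ h2
      linear_combination E + (nu μ j k * nu μ i k - nu μ k i * nu μ k j) * hBji
    rw [nu_rel hμ i k, nu_rel hμ j k] at E2
    have h3 : μ k i * μ k j = 1 := by
      have hne : nu μ i k * nu μ j k ≠ 0 :=
        mul_ne_zero (nu_ne_zero hμ i k) (nu_ne_zero hμ j k)
      apply mul_right_cancel₀ hne
      linear_combination -E2
    have h4 := (hμ i k).1
    apply mul_right_cancel₀ (mu_ne_zero hμ k i)
    linear_combination h4 - h3

end SkewAux

/-- Theorem 3.10 (c) ⇔ (d): the quadratic element `q = Σ_{i,j} B i j • z̄_i z̄_j` is central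
in the skew polynomial ring `S_μ` if and only if condition (★) holds. -/
theorem skewPoly_q_central_iff_starCond
    (𝕜 : Type*) [Field 𝕜] (hchar : (2 : 𝕜) ≠ 0) (n : ℕ) (hn : 1 ≤ n)
    (μ B : Fin n → Fin n → 𝕜) (hμ : MulAntisym μ) (hB : MuSymm μ B) :
    (∑ i, ∑ j, B i j • (skewPolyGen 𝕜 n μ i * skewPolyGen 𝕜 n μ j))
      ∈ Set.center (SkewPoly 𝕜 n μ) ↔ StarCond μ B := by
  constructor
  · exact fun hc => SkewAux.star_of_central hchar hμ hB hc
  · exact fun hstar => SkewAux.central_of_star hμ hstar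
end

section
/- The following two conditions are equivalent: (1) for all i ≠ j one has 2*(1 − μ i j)*(B i j) = 0, (1 − (μ i j)^2)*(B i i) = 0 and (1 − (μ i j)^2)*(B j j) = 0, and for all pairwise distinct i, j, k one has (1 − μ i j * μ i k)*(B j k) = 0, (μ i j − μ j k)*(B i k) = 0 and (1 − μ j k * μ i k)*(B i j) = 0; (2) condition (★) holds, i.e. for all i, j with B i j ≠ 0 one has μ i k = μ k j for all k. (The equivalence of the vanishing of all coefficients in equations (1), (2), (3) of Section 3 with condition ★.) -/
open FreeAlgebra

/-- The vanishing of all the coefficients in equations (1), (2), (3) of Section 3 is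
equivalent to condition (★). -/
theorem coefficients_vanish_iff_starCond
    (𝕜 : Type*) [Field 𝕜] (hchar : (2 : 𝕜) ≠ 0) (n : ℕ) (hn : 1 ≤ n)
    (μ B : Fin n → Fin n → 𝕜) (hμ : MulAntisym μ) (hB : MuSymm μ B) :
    ((∀ i j : Fin n, i ≠ j →
        2 * (1 - μ i j) * B i j = 0 ∧
        (1 - μ i j ^ 2) * B i i = 0 ∧
        (1 - μ i j ^ 2) * B j j = 0) ∧
      (∀ i j k : Fin n, i ≠ j → j ≠ k → i ≠ k →
        (1 - μ i j * μ i k) * B j k = 0 ∧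
        (μ i j - μ j k) * B i k = 0 ∧
        (1 - μ j k * μ i k) * B i j = 0))
    ↔ StarCond μ B := by
  constructor
  · rintro ⟨h1, h2⟩ i j hBij k
    by_cases hij : i = j
    · subst hij
      by_cases hki : k = i
      · subst hki; rfl
      · have h := (h1 k i hki).2.2
        have hsq : μ k i * μ k i = 1 := by
          by_contra h'
          refine hBij ((mul_eq_zero.mp h).resolve_left (sub_ne_zero.mpr ?_))
          intro h''; exact h' (by rw [← sq]; exact h''.symm)
        have h0 : μ k i ≠ 0 := left_ne_zero_of_mul_eq_one hsq
        have hik : μ k i * μ i k = 1 := (hμ k i).1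
        exact mul_left_cancel₀ h0 (hik.trans hsq.symm)
    · have hμij : μ i j = 1 := by
        have h := (h1 i j hij).1
        have h2' : 2 * (1 - μ i j) = 0 := (mul_eq_zero.mp h).resolve_right hBij
        have h3 : (1 - μ i j) = 0 := (mul_eq_zero.mp h2').resolve_left hchar
        exact (sub_eq_zero.mp h3).symm
      by_cases hki : k = i
      · subst hki; rw [(hμ k k).2, hμij]
      · by_cases hkj : k = j
        · subst hkj; rw [(hμ k k).2, hμij]
        · have h := (h2 i j k hij (Ne.symm hkj) (Ne.symm hki)).2.2
          have hjk : μ j k * μ i k = 1 := by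
            by_contra h'
            exact hBij ((mul_eq_zero.mp h).resolve_left (sub_ne_zero.mpr (Ne.symm h')))
          have hkj' : μ j k * μ k j = 1 := (hμ j k).1
          have hjk0 : μ j k ≠ 0 := left_ne_zero_of_mul_eq_one hkj'
          exact mul_left_cancel₀ hjk0 (hjk.trans hkj'.symm)
  · intro hstar
    constructor
    · intro i j hij
      refine ⟨?_, ?_, ?_⟩
      · by_cases hB0 : B i j = 0
        · rw [hB0, mul_zero]
        · have := hstar i j hB0 i
          rw [(hμ i i).2] at this
          rw [← this]; ring
      · by_cases hB0 : B i i = 0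
        · rw [hB0, mul_zero]
        · have h := hstar i i hB0 j
          have h1 := (hμ i j).1
          rw [h] at h1
          rw [h, sq, h1]; ring
      · by_cases hB0 : B j j = 0
        · rw [hB0, mul_zero]
        · have h := hstar j j hB0 i
          have h1 := (hμ i j).1
          rw [← h] at h1
          rw [← h, sq, h1]; ring
    · intro i j k hij hjk hik
      refine ⟨?_, ?_, ?_⟩
      · by_cases hB0 : B j k = 0
        · rw [hB0, mul_zero]
        · have h := hstar j k hB0 i
          rw [← h]
          have h1 := (hμ i j).1
          rw [mul_comm (μ i j)] at h1 ⊢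
          rw [h1]; ring
      · by_cases hB0 : B i k = 0
        · rw [hB0, mul_zero]
        · have h := hstar i k hB0 j
          rw [h]; ring
      · by_cases hB0 : B i j = 0
        · rw [hB0, mul_zero]
        · have h := hstar i j hB0 k
          rw [h]
          have h1 := (hμ j k).1
          rw [h1]; ring
end

section
/- If the skew Clifford algebra sCl(μ, B) has full dimension, i.e. its 𝕜-vector-space dimension equals 2^n, then B is a symmetric matrix: B i j = B j i for all i, j. (Corollary 3.11.) -/
open FreeAlgebra

section Aux

variable {𝕜 : Type*} [Field 𝕜] {n : ℕ} (μ B : Fin n → Fin n → 𝕜)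

local notation "x" => sClGen 𝕜 n μ B

lemma sCl_gen_rel (i j : Fin n) :
    x i * x j + μ i j • (x j * x i) = (2 * B i j) • (1 : sCl 𝕜 n μ B) := by
  have h := RingQuot.mkAlgHom_rel 𝕜 (sClRel.rel (𝕜 := 𝕜) (μ := μ) (B := B) i j)
  simpa [sClGen, map_add, map_mul, map_smul, map_one] using h

lemma sCl_gen_sq (hchar : (2:𝕜) ≠ 0) (hμ : MulAntisym μ) (i : Fin n) :
    x i * x i = B i i • (1 : sCl 𝕜 n μ B) := by
  have h := sCl_gen_rel μ B i i
  rw [(hμ i i).2, one_smul] at h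
  have h2 : (2:𝕜) • (x i * x i) = (2:𝕜) • (B i i • (1 : sCl 𝕜 n μ B)) := by
    rw [two_smul, h, mul_smul]
  exact smul_right_injective _ hchar h2

end Aux

section Mon

variable {𝕜 : Type*} [Field 𝕜] {n : ℕ} (μ B : Fin n → Fin n → 𝕜)

local notation "x" => sClGen 𝕜 n μ B

/-- Ordered square-free monomial attached to a finite set of indices. -/
noncomputable def sClMon (s : Finset (Fin n)) : sCl 𝕜 n μ B :=
  ((s.sort (· ≤ ·)).map x).prod

lemma sClMon_empty : sClMon μ B (∅ : Finset (Fin n)) = 1 := by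
  simp [sClMon]

lemma sClMon_insert {a : Fin n} {s : Finset (Fin n)} (h1 : ∀ b ∈ s, a ≤ b) (h2 : a ∉ s) :
    sClMon μ B (insert a s) = x a * sClMon μ B s := by
  unfold sClMon
  rw [Finset.sort_insert _ h1 h2, List.map_cons, List.prod_cons]

lemma sClMon_singleton (a : Fin n) : sClMon μ B {a} = x a := by
  simp [sClMon]

/-- Key straightening lemma. -/
lemma sCl_mul_mon_mem (hchar : (2:𝕜) ≠ 0) (hμ : MulAntisym μ)
    (s : Finset (Fin n)) :
    ∀ k, x k * sClMon μ B s ∈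
      Submodule.span 𝕜 {y | ∃ t ⊆ insert k s, sClMon μ B t = y} := by
  induction s using Finset.strongInductionOn with
  | _ s IH =>
    intro k
    rcases s.eq_empty_or_nonempty with rfl | hne
    · rw [sClMon_empty, mul_one]
      exact Submodule.subset_span ⟨{k}, by simp, sClMon_singleton μ B k⟩
    · set a := s.min' hne with ha
      have has : a ∈ s := s.min'_mem hne
      set rest := s.erase a with hrest
      have hins : insert a rest = s := Finset.insert_erase has
      have hrest_gt : ∀ b ∈ rest, a < b := fun b hb =>
        lt_of_le_of_ne (s.min'_le b (Finset.mem_of_mem_erase hb))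
          (Ne.symm (Finset.ne_of_mem_erase hb))
      have hanotin : a ∉ rest := Finset.notMem_erase a s
      have hmon : sClMon μ B s = x a * sClMon μ B rest := by
        rw [← hins, sClMon_insert μ B (fun b hb => (hrest_gt b hb).le) hanotin]
      have hrsub : rest ⊂ s := Finset.erase_ssubset has
      rcases lt_trichotomy k a with hk | hk | hk
      · -- k < a : direct head insertion
        have hknotin : k ∉ s := fun h => absurd (s.min'_le k h) (not_le.mpr hk)
        have : sClMon μ B (insert k s) = x k * sClMon μ B s :=
          sClMon_insert μ B (fun b hb => (lt_of_lt_of_le hk (s.min'_le b hb)).le) hknotin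
        exact Submodule.subset_span ⟨insert k s, Finset.Subset.refl _, this⟩
      · -- k = a : use the square relation
        subst hk
        rw [hmon, ← mul_assoc, sCl_gen_sq μ B hchar hμ, smul_mul_assoc, one_mul]
        exact Submodule.smul_mem _ _ (Submodule.subset_span
          ⟨rest, (Finset.subset_insert _ _).trans
            (Finset.insert_subset_insert _ hrsub.subset), rfl⟩)
      · -- a < k : commute past the head
        have hswap : x k * x a = (2 * B k a) • (1 : sCl 𝕜 n μ B) - μ k a • (x a * x k) := by
          have := sCl_gen_rel μ B k a
          linear_combination (norm := module) this
        have hmem := IH rest hrsub k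
        -- multiply the IH membership on the left by `x a`
        have hstep : x a * (x k * sClMon μ B rest) ∈
            Submodule.span 𝕜 {y | ∃ t ⊆ insert k s, sClMon μ B t = y} := by
          refine Submodule.span_induction (p := fun y _ => x a * y ∈
              Submodule.span 𝕜 {y | ∃ t ⊆ insert k s, sClMon μ B t = y}) ?_ ?_ ?_ ?_ hmem
          · rintro y ⟨t, hts, rfl⟩
            have hat : a ∉ t := fun h => by
              rcases Finset.mem_insert.mp (hts h) with h' | h'
              · exact absurd h'.symm (ne_of_lt hk).symm
              · exact absurd h' hanotin
            have htgt : ∀ b ∈ t, a ≤ b := fun b hb => by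
              rcases Finset.mem_insert.mp (hts hb) with h' | h'
              · exact h' ▸ hk.le
              · exact (hrest_gt b h').le
            have : x a * sClMon μ B t = sClMon μ B (insert a t) :=
              (sClMon_insert μ B htgt hat).symm
            rw [this]
            refine Submodule.subset_span ⟨insert a t, ?_, rfl⟩
            intro b hb
            rcases Finset.mem_insert.mp hb with rfl | hb'
            · exact Finset.mem_insert_of_mem has
            · rcases Finset.mem_insert.mp (hts hb') with rfl | hb''
              · exact Finset.mem_insert_self _ _
              · exact Finset.mem_insert_of_mem (hrsub.subset hb'')
          · simp
          · intro y z _ _ hy hz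
            rw [mul_add]; exact Submodule.add_mem _ hy hz
          · intro c y _ hy
            rw [mul_smul_comm]; exact Submodule.smul_mem _ _ hy
        rw [hmon, ← mul_assoc, hswap, sub_mul, smul_mul_assoc, one_mul, smul_mul_assoc,
          mul_assoc]
        refine Submodule.sub_mem _ ?_ (Submodule.smul_mem _ _ hstep)
        exact Submodule.smul_mem _ _ (Submodule.subset_span
          ⟨rest, (Finset.subset_insert _ _).trans
            (Finset.insert_subset_insert _ hrsub.subset), rfl⟩)

end Mon

section Span

variable {𝕜 : Type*} [Field 𝕜] {n : ℕ} (μ B : Fin n → Fin n → 𝕜)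

local notation "x" => sClGen 𝕜 n μ B

lemma sCl_adjoin_top : Algebra.adjoin 𝕜 (Set.range (sClGen 𝕜 n μ B)) = ⊤ := by
  have h : Set.range (sClGen 𝕜 n μ B) =
      RingQuot.mkAlgHom 𝕜 (sClRel 𝕜 n μ B) '' Set.range (ι 𝕜) := by
    rw [← Set.range_comp]; rfl
  rw [h, ← AlgHom.map_adjoin, FreeAlgebra.adjoin_range_ι, Algebra.map_top]
  exact (AlgHom.range_eq_top _).mpr (RingQuot.mkAlgHom_surjective 𝕜 _)

lemma sCl_finrank_le (hchar : (2:𝕜) ≠ 0) (hμ : MulAntisym μ) {i j : Fin n} (hij : i ≠ j)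
    {c : 𝕜} (hx : x j = c • x i) :
    Module.finrank 𝕜 (sCl 𝕜 n μ B) ≤ 2 ^ (n - 1) := by
  classical
  set M := Submodule.span 𝕜 {y | ∃ t : Finset (Fin n), j ∉ t ∧ sClMon μ B t = y} with hM
  have hsub : ∀ (k : Fin n) (t : Finset (Fin n)), k ≠ j → j ∉ t →
      Submodule.span 𝕜 {y | ∃ t' ⊆ insert k t, sClMon μ B t' = y} ≤ M := by
    intro k t hkj hjt
    refine Submodule.span_le.mpr ?_
    rintro y ⟨t', ht', rfl⟩
    refine Submodule.subset_span ⟨t', fun h => ?_, rfl⟩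
    rcases Finset.mem_insert.mp (ht' h) with h' | h'
    · exact hkj h'.symm
    · exact hjt h'
  have hgen : ∀ (k : Fin n), ∀ y ∈ M, x k * y ∈ M := by
    intro k y hy
    refine Submodule.span_induction (p := fun y _ => x k * y ∈ M) ?_ (by simp) ?_ ?_ hy
    · rintro y ⟨t, hjt, rfl⟩
      by_cases hkj : k = j
      · subst hkj
        rw [hx, smul_mul_assoc]
        exact Submodule.smul_mem _ _
          (hsub i t hij hjt (sCl_mul_mon_mem μ B hchar hμ t i))
      · exact hsub k t hkj hjt (sCl_mul_mon_mem μ B hchar hμ t k)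
    · intro u v _ _ hu hv; rw [mul_add]; exact Submodule.add_mem _ hu hv
    · intro a u _ hu; rw [mul_smul_comm]; exact Submodule.smul_mem _ _ hu
  have hone : (1 : sCl 𝕜 n μ B) ∈ M :=
    Submodule.subset_span ⟨∅, by simp, sClMon_empty μ B⟩
  have htop : M = ⊤ := by
    rw [eq_top_iff]
    intro z _
    have hz : z ∈ Algebra.adjoin 𝕜 (Set.range (sClGen 𝕜 n μ B)) := by
      rw [sCl_adjoin_top]; trivial
    have key : ∀ w ∈ M, z * w ∈ M := by
      refine Algebra.adjoin_induction (p := fun z _ => ∀ w ∈ M, z * w ∈ M) ?_ ?_ ?_ ?_ hz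
      · rintro _ ⟨k, rfl⟩ w hw; exact hgen k w hw
      · intro r w hw
        rw [← Algebra.smul_def]; exact Submodule.smul_mem _ _ hw
      · intro z1 z2 _ _ h1 h2 w hw; rw [add_mul]; exact Submodule.add_mem _ (h1 w hw) (h2 w hw)
      · intro z1 z2 _ _ h1 h2 w hw; rw [mul_assoc]; exact h1 _ (h2 w hw)
    simpa using key 1 hone
  let e : Finset {k : Fin n // k ≠ j} → sCl 𝕜 n μ B := fun t =>
    sClMon μ B (t.map (Function.Embedding.subtype _))
  have hspan : Submodule.span 𝕜 (Set.range e) = ⊤ := by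
    rw [eq_top_iff, ← htop]
    refine Submodule.span_le.mpr ?_
    rintro y ⟨t, hjt, rfl⟩
    refine Submodule.subset_span ⟨t.subtype (· ≠ j), ?_⟩
    have ht : (t.subtype (· ≠ j)).map (Function.Embedding.subtype _) = t :=
      Finset.subtype_map_of_mem (fun b hb h => hjt (by rwa [h] at hb))
    simp only [e, ht]
  have hcard : Fintype.card {k : Fin n // k ≠ j} = n - 1 := by
    simp [Fintype.card_subtype_compl]
  calc Module.finrank 𝕜 (sCl 𝕜 n μ B) ≤ Fintype.card (Finset {k : Fin n // k ≠ j}) :=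
        finrank_le_of_span_eq_top hspan
    _ = 2 ^ (n - 1) := by rw [Fintype.card_finset, hcard]

end Span

/-- Corollary 3.11: if `sCl(μ, B)` has full dimension `2 ^ n`, then `B` is symmetric. -/
theorem skewClifford_fullDim_implies_B_symmetric
    (𝕜 : Type*) [Field 𝕜] (hchar : (2 : 𝕜) ≠ 0) (n : ℕ) (hn : 1 ≤ n)
    (μ B : Fin n → Fin n → 𝕜) (hμ : MulAntisym μ) (hB : MuSymm μ B)
    (hfull : Module.finrank 𝕜 (sCl 𝕜 n μ B) = 2 ^ n) :
    ∀ i j, B i j = B j i := by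
  intro i j
  by_cases h0 : B i j = 0
  · have h1 : B j i = μ j i * B i j := hB j i
    rw [h0, mul_zero] at h1
    rw [h0, h1]
  · suffices hμ1 : μ i j = 1 by rw [hB i j, hμ1, one_mul]
    by_contra hμ1
    have hij : i ≠ j := fun h => hμ1 (h ▸ (hμ i i).2)
    set x : Fin n → sCl 𝕜 n μ B := sClGen 𝕜 n μ B with hxdef
    have hxixj : x i * x j = (2 * B i j) • (1 : sCl 𝕜 n μ B) - μ i j • (x j * x i) :=
      eq_sub_of_add_eq (sCl_gen_rel μ B i j)
    have hsqj : x j * x j = B j j • (1 : sCl 𝕜 n μ B) := sCl_gen_sq μ B hchar hμ j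
    have e1 : (2 * B i j) • x j
        = B j j • x i + (μ i j * (2 * B i j)) • x j - (μ i j * (μ i j * B j j)) • x i := by
      calc (2 * B i j) • x j = ((2 * B i j) • (1 : sCl 𝕜 n μ B)) * x j := by
            rw [smul_mul_assoc, one_mul]
        _ = (x i * x j + μ i j • (x j * x i)) * x j := by rw [sCl_gen_rel μ B i j]
        _ = x i * (x j * x j) + μ i j • (x j * (x i * x j)) := by
            rw [add_mul, mul_assoc, smul_mul_assoc, mul_assoc]
        _ = B j j • x i + μ i j • (x j * ((2 * B i j) • (1 : sCl 𝕜 n μ B)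
              - μ i j • (x j * x i))) := by
            rw [hsqj, mul_smul_comm, mul_one, hxixj]
        _ = B j j • x i + μ i j • ((2 * B i j) • x j - μ i j • ((x j * x j) * x i)) := by
            rw [mul_sub, mul_smul_comm, mul_one, mul_smul_comm, mul_assoc]
        _ = B j j • x i + (μ i j * (2 * B i j)) • x j - (μ i j * (μ i j * B j j)) • x i := by
            rw [hsqj, smul_mul_assoc, one_mul]
            module
    have e2 : ((2 * B i j) - μ i j * (2 * B i j)) • x j
        = (B j j - μ i j * (μ i j * B j j)) • x i := by
      linear_combination (norm := module) e1
    have hd : (2 * B i j) - μ i j * (2 * B i j) ≠ 0 := by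
      intro h
      have h2 : μ i j * (2 * B i j) = 1 * (2 * B i j) := by
        rw [one_mul]; exact (sub_eq_zero.mp h).symm
      exact hμ1 (mul_right_cancel₀ (mul_ne_zero hchar h0) h2)
    have hx : x j = (((2 * B i j) - μ i j * (2 * B i j))⁻¹
        * (B j j - μ i j * (μ i j * B j j))) • x i := by
      rw [mul_smul, ← e2, smul_smul, inv_mul_cancel₀ hd, one_smul]
    have hle := sCl_finrank_le μ B hchar hμ hij hx
    rw [hfull] at hle
    have hlt : 2 ^ (n - 1) < 2 ^ n :=
      Nat.pow_lt_pow_right one_lt_two (by omega)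
    omega
end

section
/- Suppose sCl(μ, B) has 𝕜-vector-space dimension 2^n and B is a diagonal matrix of rank n (that is, B i j = 0 for all i ≠ j and B i i ≠ 0 for all i). Then μ is a symmetric matrix with μ i j = μ j i and (μ i j)^2 = 1 for all i, j. (Remark 3.12.) -/
open FreeAlgebra

/-- Remark 3.12: if `sCl(μ, B)` has full dimension and `B` is diagonal of rank `n`, then
`μ` is symmetric with `(μ i j)^2 = 1` for all `i, j`. -/
theorem skewClifford_fullDim_diagonal_implies_mu_symmetric
    (𝕜 : Type*) [Field 𝕜] (hchar : (2 : 𝕜) ≠ 0) (n : ℕ) (hn : 1 ≤ n)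
    (μ B : Fin n → Fin n → 𝕜) (hμ : MulAntisym μ) (hB : MuSymm μ B)
    (hfull : Module.finrank 𝕜 (sCl 𝕜 n μ B) = 2 ^ n)
    (hdiag : ∀ i j, i ≠ j → B i j = 0) (hrank : ∀ i, B i i ≠ 0) :
    ∀ i j, μ i j = μ j i ∧ μ i j ^ 2 = 1 := by
  set X := sClGen 𝕜 n μ B with hX
  -- the defining relations, in the quotient
  have hrel : ∀ i j, X i * X j + μ i j • (X j * X i)
      = (2 * B i j) • (1 : sCl 𝕜 n μ B) := by
    intro i j
    have := RingQuot.mkAlgHom_rel 𝕜 (sClRel.rel i j : sClRel 𝕜 n μ B _ _)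
    simpa [hX, sClGen, map_add, map_mul, map_smul, map_one] using this
  -- squares of generators
  have hsq : ∀ i, X i * X i = B i i • (1 : sCl 𝕜 n μ B) := by
    intro i
    have h := hrel i i
    rw [(hμ i i).2, one_smul] at h
    have h2 : (2 : 𝕜) • (X i * X i) = (2 : 𝕜) • (B i i • (1 : sCl 𝕜 n μ B)) := by
      rw [two_smul, h, smul_smul]
    exact smul_right_injective _ hchar h2
  -- nontriviality of the quotient from the dimension hypothesis
  have hnt : Nontrivial (sCl 𝕜 n μ B) := by
    by_contra hcon
    have : Subsingleton (sCl 𝕜 n μ B) := not_nontrivial_iff_subsingleton.mp hcon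
    rw [Module.finrank_zero_of_subsingleton] at hfull
    exact (pow_ne_zero n two_ne_zero) hfull.symm
  have hone : (1 : sCl 𝕜 n μ B) ≠ 0 := one_ne_zero
  -- generators are nonzero
  have hXne : ∀ i, X i ≠ 0 := by
    intro i h0
    have hs := hsq i
    rw [h0, mul_zero] at hs
    rcases smul_eq_zero.mp hs.symm with h | h
    · exact hrank i h
    · exact hone h
  intro i j
  by_cases hij : i = j
  · subst hij
    exact ⟨rfl, by rw [(hμ i i).2]; ring⟩
  · have hBij : B i j = 0 := hdiag i j hij
    have h1 : X i * X j + μ i j • (X j * X i) = 0 := by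
      have h := hrel i j
      rw [hBij, mul_zero, zero_smul] at h
      exact h
    -- multiply the relation on the right by `X i`
    have R : X i * (X j * X i) + (μ i j * B i i) • X j = 0 := by
      have h := congrArg (fun y => y * X i) h1
      simp only [add_mul, smul_mul_assoc, mul_assoc, hsq i, mul_smul_comm, mul_one,
        smul_smul, zero_mul] at h
      exact h
    -- multiply the relation on the left by `X i`
    have L : B i i • X j + μ i j • (X i * (X j * X i)) = 0 := by
      have h := congrArg (fun y => X i * y) h1
      simp only [mul_add, mul_smul_comm, mul_zero] at h
      rw [← mul_assoc, hsq i, smul_mul_assoc, one_mul] at h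
      exact h
    -- multiply R by `μ i j`
    have R2 : μ i j • (X i * (X j * X i)) + (μ i j * (μ i j * B i i)) • X j = 0 := by
      have h := congrArg (fun y => μ i j • y) R
      simp only [smul_add, smul_smul, smul_zero] at h
      exact h
    have L' : μ i j • (X i * (X j * X i)) + B i i • X j = 0 :=
      (add_comm (B i i • X j) (μ i j • (X i * (X j * X i)))).symm.trans L
    have key : (μ i j * (μ i j * B i i)) • X j = B i i • X j :=
      add_left_cancel (R2.trans L'.symm)
    have hc : μ i j * (μ i j * B i i) = B i i := smul_left_injective 𝕜 (hXne j) key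
    have hsq1 : μ i j ^ 2 = 1 := by
      have h2 : μ i j ^ 2 * B i i = 1 * B i i := by rw [one_mul]; linear_combination hc
      exact mul_right_cancel₀ (hrank i) h2
    refine ⟨?_, hsq1⟩
    have hμij : μ i j * μ j i = 1 := (hμ i j).1
    have hne : μ i j ≠ 0 := by
      intro h0; rw [h0, zero_mul] at hμij; exact one_ne_zero hμij.symm
    have : μ i j * μ i j = μ i j * μ j i := by
      rw [hμij, ← hsq1]; ring
    exact mul_left_cancel₀ hne this
end

section
/- For every multiplicatively antisymmetric μ, the quantum exterior algebra Λ_μ = sCl(μ, 0) has full dimension: its 𝕜-vector-space dimension equals 2^n. (Example 3.4.) -/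
open FreeAlgebra

/-
Λ_μ is spanned by the ordered monomials `x_S = x_{s₁} ⋯ x_{s_k}` (`s₁ < ⋯ < s_k`), one for each
`S ⊆ Fin n`: the relations let `x_i` move past `x_j` at the cost of the scalar `-μ i j`, and
`x_i² = 0` because `2 ≠ 0`. They are linearly independent because `Λ_μ` acts on the
`2ⁿ`-dimensional space with basis `(e_S)_S` by `x_i e_S = (∏_{k ∈ S, k < i} (-μ i k)) e_{S ∪ {i}}`
for `i ∉ S` and `x_i e_S = 0` for `i ∈ S`; the coefficients are nonzero, so `x_S e_∅` is a
nonzero multiple of `e_S`.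
-/

noncomputable section

lemma MulAntisym.ne_zero {𝕜 : Type*} [Field 𝕜] {n : ℕ} {μ : Fin n → Fin n → 𝕜}
    (hμ : MulAntisym μ) (i j : Fin n) : μ i j ≠ 0 :=
  left_ne_zero_of_mul_eq_one (hμ i j).1

lemma Finset.sort_insert_eq_orderedInsert {α : Type*} [LinearOrder α] {a : α}
    {s : Finset α} (ha : a ∉ s) :
    (insert a s).sort (· ≤ ·) = (s.sort (· ≤ ·)).orderedInsert (· ≤ ·) a := by
  apply List.Perm.eq_of_pairwise' (Finset.pairwise_sort _ _)
    ((Finset.pairwise_sort s _).orderedInsert a _)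
  refine (Finset.sort_perm_toList _ _).trans ((Finset.toList_insert ha).trans ?_)
  exact (List.Perm.cons a (Finset.sort_perm_toList s _).symm).trans
    (List.perm_orderedInsert _ _ _).symm

namespace QuantumExterior

variable {𝕜 : Type*} [Field 𝕜] {n : ℕ} {μ : Fin n → Fin n → 𝕜}

local notation "Λ" => sCl 𝕜 n μ (fun _ _ => 0)
local notation "x" => sClGen 𝕜 n μ (fun _ _ => 0)
local notation "e" => Pi.basisFun 𝕜 (Finset (Fin n))

variable (μ) in
def wedgeCoeff (i : Fin n) (S : Finset (Fin n)) : 𝕜 := ∏ k ∈ S with k < i, -μ i k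

lemma wedgeCoeff_ne_zero (hμ : MulAntisym μ) (i : Fin n) (S : Finset (Fin n)) :
    wedgeCoeff μ i S ≠ 0 :=
  Finset.prod_ne_zero_iff.2 fun k _ => neg_ne_zero.2 (hμ.ne_zero i k)

lemma wedgeCoeff_insert_of_lt {i j : Fin n} {S : Finset (Fin n)} (hj : j ∉ S) (h : j < i) :
    wedgeCoeff μ i (insert j S) = -μ i j * wedgeCoeff μ i S := by
  rw [wedgeCoeff, Finset.filter_insert, if_pos h, Finset.prod_insert (by simp [hj]), wedgeCoeff]

lemma wedgeCoeff_insert_of_le {i j : Fin n} (S : Finset (Fin n)) (h : i ≤ j) :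
    wedgeCoeff μ i (insert j S) = wedgeCoeff μ i S := by
  rw [wedgeCoeff, Finset.filter_insert, if_neg h.not_gt, wedgeCoeff]

lemma wedgeCoeff_anticomm (hμ : MulAntisym μ) {i j : Fin n} (hij : i ≠ j) {S : Finset (Fin n)}
    (hi : i ∉ S) (hj : j ∉ S) :
    wedgeCoeff μ j S * wedgeCoeff μ i (insert j S)
      + μ i j * wedgeCoeff μ i S * wedgeCoeff μ j (insert i S) = 0 := by
  rcases hij.lt_or_gt with h | h
  · rw [wedgeCoeff_insert_of_le S h.le, wedgeCoeff_insert_of_lt hi h]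
    linear_combination (-(wedgeCoeff μ i S * wedgeCoeff μ j S)) * (hμ i j).1
  · rw [wedgeCoeff_insert_of_lt hj h, wedgeCoeff_insert_of_le S h.le]
    ring

variable (μ) in
def wedgeOp (i : Fin n) : Module.End 𝕜 (Finset (Fin n) → 𝕜) :=
  (e).constr 𝕜 fun S => if i ∈ S then 0 else wedgeCoeff μ i S • e (insert i S)

lemma wedgeOp_basis_of_mem {i : Fin n} {S : Finset (Fin n)} (hi : i ∈ S) :
    wedgeOp μ i (e S) = 0 := by
  rw [wedgeOp, Module.Basis.constr_basis, if_pos hi]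

lemma wedgeOp_basis_of_notMem {i : Fin n} {S : Finset (Fin n)} (hi : i ∉ S) :
    wedgeOp μ i (e S) = wedgeCoeff μ i S • e (insert i S) := by
  rw [wedgeOp, Module.Basis.constr_basis, if_neg hi]

lemma wedgeOp_wedgeOp_basis_eq_zero {i j : Fin n} {S : Finset (Fin n)}
    (h : j ∈ S ∨ i ∈ insert j S) : wedgeOp μ i (wedgeOp μ j (e S)) = 0 := by
  by_cases hj : j ∈ S
  · rw [wedgeOp_basis_of_mem hj, map_zero]
  · rw [wedgeOp_basis_of_notMem hj, map_smul, wedgeOp_basis_of_mem (h.resolve_left hj),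
      smul_zero]

lemma wedgeOp_anticomm (hμ : MulAntisym μ) (i j : Fin n) :
    wedgeOp μ i * wedgeOp μ j + μ i j • (wedgeOp μ j * wedgeOp μ i) = 0 := by
  refine (e).ext fun S => ?_
  simp only [LinearMap.add_apply, LinearMap.smul_apply, Module.End.mul_apply,
    LinearMap.zero_apply]
  by_cases hS : i ∉ S ∧ j ∉ S ∧ i ≠ j
  · obtain ⟨hi, hj, hij⟩ := hS
    have hij' : i ∉ insert j S := by simp [hi, hij]
    have hji' : j ∉ insert i S := by simp [hj, hij.symm]
    rw [wedgeOp_basis_of_notMem hi, wedgeOp_basis_of_notMem hj, map_smul, map_smul,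
      wedgeOp_basis_of_notMem hij', wedgeOp_basis_of_notMem hji', Finset.insert_comm j i,
      smul_smul, smul_smul, smul_smul, ← add_smul, wedgeCoeff_anticomm hμ hij hi hj, zero_smul]
  · have hS' : (j ∈ S ∨ i ∈ insert j S) ∧ (i ∈ S ∨ j ∈ insert i S) := by
      simp only [Finset.mem_insert]; tauto
    rw [wedgeOp_wedgeOp_basis_eq_zero hS'.1, wedgeOp_wedgeOp_basis_eq_zero hS'.2, smul_zero,
      add_zero]

variable (μ) in
def wedgeRep (hμ : MulAntisym μ) : Λ →ₐ[𝕜] Module.End 𝕜 (Finset (Fin n) → 𝕜) :=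
  RingQuot.liftAlgHom 𝕜 ⟨FreeAlgebra.lift 𝕜 (wedgeOp μ), by
    rintro _ _ ⟨i, j⟩
    simpa only [map_add, map_mul, map_smul, FreeAlgebra.lift_ι_apply, mul_zero, zero_smul,
      map_zero] using wedgeOp_anticomm hμ i j⟩

lemma wedgeRep_sClGen (hμ : MulAntisym μ) (i : Fin n) : wedgeRep μ hμ (x i) = wedgeOp μ i := by
  rw [wedgeRep, sClGen, RingQuot.liftAlgHom_mkAlgHom_apply, FreeAlgebra.lift_ι_apply]

lemma prod_wedgeOp_basis_empty (hμ : MulAntisym μ) {l : List (Fin n)}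
    (hl : l.Pairwise (· < ·)) :
    ∃ c : 𝕜, c ≠ 0 ∧ (l.map (wedgeOp μ)).prod (e ∅) = c • e l.toFinset := by
  induction l with
  | nil => exact ⟨1, one_ne_zero, by simp⟩
  | cons i l ih =>
    obtain ⟨c, hc, hl_eq⟩ := ih hl.of_cons
    have hi : i ∉ l.toFinset := fun h =>
      lt_irrefl i (List.rel_of_pairwise_cons hl (List.mem_toFinset.1 h))
    refine ⟨wedgeCoeff μ i l.toFinset * c, mul_ne_zero (wedgeCoeff_ne_zero hμ _ _) hc, ?_⟩
    rw [List.map_cons, List.prod_cons, Module.End.mul_apply, hl_eq, map_smul,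
      wedgeOp_basis_of_notMem hi, List.toFinset_cons, smul_smul, mul_comm]
lemma sClGen_anticomm (i j : Fin n) : x i * x j + μ i j • (x j * x i) = 0 := by
  simpa only [sClGen, map_add, map_mul, map_smul, mul_zero, zero_smul, map_zero] using
    RingQuot.mkAlgHom_rel 𝕜 (sClRel.rel (μ := μ) (B := fun _ _ => 0) i j)

lemma sClGen_mul_sClGen (i j : Fin n) : x i * x j = -μ i j • (x j * x i) :=
  (eq_neg_of_add_eq_zero_left (sClGen_anticomm i j)).trans (neg_smul (μ i j) _).symm

lemma sClGen_mul_self (hμ : MulAntisym μ) (hchar : (2 : 𝕜) ≠ 0) (i : Fin n) :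
    x i * x i = 0 := by
  have h := sClGen_anticomm (μ := μ) i i
  rw [(hμ i i).2, one_smul, ← two_smul 𝕜] at h
  exact (smul_eq_zero.1 h).resolve_left hchar

lemma sClGen_mul_prod_of_mem (hμ : MulAntisym μ) (hchar : (2 : 𝕜) ≠ 0) {i : Fin n}
    {l : List (Fin n)} (hi : i ∈ l) : x i * (l.map x).prod = 0 := by
  induction l with
  | nil => simp at hi
  | cons j l ih =>
    rw [List.map_cons, List.prod_cons, ← mul_assoc]
    obtain rfl | hil := List.mem_cons.1 hi
    · rw [sClGen_mul_self hμ hchar, zero_mul]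
    · rw [sClGen_mul_sClGen, smul_mul_assoc, mul_assoc, ih hil, mul_zero, smul_zero]

lemma sClGen_mul_prod (i : Fin n) (l : List (Fin n)) :
    ∃ c : 𝕜, x i * (l.map x).prod = c • ((l.orderedInsert (· ≤ ·) i).map x).prod := by
  induction l with
  | nil => exact ⟨1, by simp⟩
  | cons j l ih =>
    by_cases hij : i ≤ j
    · exact ⟨1, by simp only [List.orderedInsert, if_pos hij, one_smul, List.map_cons,
        List.prod_cons]⟩
    · obtain ⟨c, hc⟩ := ih
      refine ⟨-μ i j * c, ?_⟩
      simp only [List.orderedInsert, if_neg hij, List.map_cons, List.prod_cons]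
      rw [← mul_assoc, sClGen_mul_sClGen, smul_mul_assoc, mul_assoc, hc, mul_smul_comm,
        smul_smul]

variable (μ) in
def monomial (S : Finset (Fin n)) : Λ := ((S.sort (· ≤ ·)).map x).prod

lemma sClGen_mul_monomial (hμ : MulAntisym μ) (hchar : (2 : 𝕜) ≠ 0) (i : Fin n)
    (S : Finset (Fin n)) : ∃ c : 𝕜, x i * monomial μ S = c • monomial μ (insert i S) := by
  by_cases hi : i ∈ S
  · exact ⟨0, by rw [zero_smul, monomial,
      sClGen_mul_prod_of_mem hμ hchar ((Finset.mem_sort _).2 hi)]⟩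
  · rw [monomial, monomial, Finset.sort_insert_eq_orderedInsert hi]
    exact sClGen_mul_prod i _

lemma sClGen_mul_mem_span_monomial (hμ : MulAntisym μ) (hchar : (2 : 𝕜) ≠ 0) (i : Fin n)
    {a : Λ} (ha : a ∈ Submodule.span 𝕜 (Set.range (monomial μ))) :
    x i * a ∈ Submodule.span 𝕜 (Set.range (monomial μ)) := by
  induction ha using Submodule.span_induction with
  | mem _ h =>
    obtain ⟨S, rfl⟩ := h
    obtain ⟨c, hc⟩ := sClGen_mul_monomial hμ hchar i S
    exact hc ▸ Submodule.smul_mem _ c (Submodule.subset_span ⟨_, rfl⟩)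
  | zero => simp
  | add _ _ _ _ ha hb => rw [mul_add]; exact add_mem ha hb
  | smul c _ _ ha => rw [mul_smul_comm]; exact Submodule.smul_mem _ c ha

lemma span_monomial (hμ : MulAntisym μ) (hchar : (2 : 𝕜) ≠ 0) :
    Submodule.span 𝕜 (Set.range (monomial μ)) = ⊤ := by
  set P := Submodule.span 𝕜 (Set.range (monomial μ))
  have hone : (1 : Λ) ∈ P := Submodule.subset_span ⟨∅, by simp [monomial]⟩
  suffices h : ∀ a : FreeAlgebra 𝕜 (Fin n), ∀ b ∈ P,
      RingQuot.mkAlgHom 𝕜 (sClRel 𝕜 n μ fun _ _ => 0) a * b ∈ P by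
    refine eq_top_iff.2 fun y _ => ?_
    obtain ⟨a, rfl⟩ := RingQuot.mkAlgHom_surjective 𝕜 _ y
    simpa using h a 1 hone
  intro a
  induction a using FreeAlgebra.induction with
  | grade0 r =>
    intro b hb
    rw [AlgHom.commutes, Algebra.algebraMap_eq_smul_one, smul_one_mul]
    exact Submodule.smul_mem _ r hb
  | grade1 i => exact fun b => sClGen_mul_mem_span_monomial hμ hchar i
  | mul a₁ a₂ h₁ h₂ => intro b hb; rw [map_mul, mul_assoc]; exact h₁ _ (h₂ b hb)
  | add a₁ a₂ h₁ h₂ => intro b hb; rw [map_add, add_mul]; exact add_mem (h₁ b hb) (h₂ b hb)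

lemma wedgeRep_monomial_basis_empty (hμ : MulAntisym μ) (S : Finset (Fin n)) :
    ∃ c : 𝕜, c ≠ 0 ∧ wedgeRep μ hμ (monomial μ S) (e ∅) = c • e S := by
  have h := prod_wedgeOp_basis_empty (μ := μ) hμ (Finset.sortedLT_sort S).pairwise
  rwa [Finset.sort_toFinset, ← List.map_congr_left (f := wedgeRep μ hμ ∘ x)
    fun i _ => wedgeRep_sClGen hμ i, ← List.map_map, ← map_list_prod] at h

lemma linearIndependent_monomial (hμ : MulAntisym μ) :
    LinearIndependent 𝕜 (monomial μ) := by
  choose c hc hmon using wedgeRep_monomial_basis_empty hμ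
  let evalEmpty : Λ →ₗ[𝕜] Finset (Fin n) → 𝕜 :=
    (LinearMap.applyₗ (e ∅)).comp (wedgeRep μ hμ).toLinearMap
  refine LinearIndependent.of_comp evalEmpty ?_
  have h : evalEmpty ∘ monomial μ = (fun S => Units.mk0 (c S) (hc S)) • ⇑(e) :=
    funext fun S => hmon S
  rw [h]
  exact (e).linearIndependent.units_smul _

def monomialBasis (hμ : MulAntisym μ) (hchar : (2 : 𝕜) ≠ 0) :
    Module.Basis (Finset (Fin n)) 𝕜 Λ :=
  .mk (linearIndependent_monomial hμ) (span_monomial hμ hchar).ge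

end QuantumExterior

end

theorem quantum_exterior_full_dimension_general
    (𝕜 : Type*) [Field 𝕜] (hchar : (2 : 𝕜) ≠ 0) (n : ℕ)
    (μ : Fin n → Fin n → 𝕜) (hμ : MulAntisym μ) :
    Module.finrank 𝕜 (sCl 𝕜 n μ (fun _ _ => 0)) = 2 ^ n := by
  rw [Module.finrank_eq_card_basis (QuantumExterior.monomialBasis hμ hchar),
    Fintype.card_finset, Fintype.card_fin]

/-- Example 3.4: the quantum exterior algebra `Λ_μ = sCl(μ, 0)` has full dimension
`2 ^ n`. -/
theorem quantum_exterior_full_dimension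
    (𝕜 : Type*) [Field 𝕜] (hchar : (2 : 𝕜) ≠ 0) (n : ℕ) (hn : 1 ≤ n)
    (μ : Fin n → Fin n → 𝕜) (hμ : MulAntisym μ) :
    Module.finrank 𝕜 (sCl 𝕜 n μ (fun _ _ => 0)) = 2 ^ n :=
  quantum_exterior_full_dimension_general 𝕜 hchar n μ hμ
end

section
/- Suppose condition (★) holds and B ≠ 0. Let Q be the quotient of the free algebra on generators X_1, …, X_n, Y (i.e. FreeAlgebra 𝕜 (Fin n ⊕ Unit)) by the two-sided ideal generated by all elements X_i * X_j + μ i j • (X_j * X_i) − (2 * B i j) • Y for i, j ∈ Fin n. Then the image of Y is central in Q. (Theorem 5.1: the quadratic relations of the homogenization A imply the centrality of the degree-two generator y, so A is a quadratic algebra.) -/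
open FreeAlgebra

/-- The quadratic relations of the homogenization: `X_i X_j + μ i j • (X_j X_i)` is
identified with `(2 * B i j) • Y`. -/
inductive HomogRel (𝕜 : Type*) [Field 𝕜] (n : ℕ) (μ B : Fin n → Fin n → 𝕜) :
    FreeAlgebra 𝕜 (Fin n ⊕ Unit) → FreeAlgebra 𝕜 (Fin n ⊕ Unit) → Prop
  | rel (i j : Fin n) : HomogRel 𝕜 n μ B
      (ι 𝕜 (Sum.inl i) * ι 𝕜 (Sum.inl j) + μ i j • (ι 𝕜 (Sum.inl j) * ι 𝕜 (Sum.inl i)))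
      ((2 * B i j) • ι 𝕜 (Sum.inr ()))

/-- Auxiliary lemma: in any `𝕜`-algebra with elements `x k`, `y` satisfying the quadratic
relations, `y` commutes with each `x k`. -/
lemma key_comm {𝕜 : Type*} [Field 𝕜] {n : ℕ} {μ B : Fin n → Fin n → 𝕜}
    {Q : Type*} [Ring Q] [Algebra 𝕜 Q]
    (hchar : (2 : 𝕜) ≠ 0) (hμ : MulAntisym μ) (hB : MuSymm μ B)
    (hstar : StarCond μ B) {i j : Fin n} (hij : B i j ≠ 0)
    (x : Fin n → Q) (y : Q)
    (hrel : ∀ a b, x a * x b + μ a b • (x b * x a) = (2 * B a b) • y) :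
    ∀ k, x k * y = y * x k := by
  have hd : (2 * B i j : 𝕜) ≠ 0 := mul_ne_zero hchar hij
  have cancel : ∀ (u v : Q), (2 * B i j) • u = (2 * B i j) • v → u = v := by
    intro u v h
    exact smul_right_injective Q hd h
  have μij : μ i j = 1 := by
    have h := hstar i j hij i
    rw [(hμ i i).2] at h
    exact h.symm
  have μji : μ j i = 1 := by
    have h := (hμ i j).1
    rw [μij, one_mul] at h
    exact h
  have mulrel : ∀ a b, x a * x b = (2 * B a b) • y - μ a b • (x b * x a) := fun a b =>
    eq_sub_of_add_eq (hrel a b)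
  have sq : ∀ a, x a * x a = B a a • y := by
    intro a
    have h := hrel a a
    rw [(hμ a a).2, one_smul, ← two_smul 𝕜] at h
    have h2 := congrArg (fun z => (2 : 𝕜)⁻¹ • z) h
    simpa [smul_smul, inv_mul_cancel₀ hchar, ← mul_assoc] using h2
  -- commutation with x i
  have L1 : (2 * B i j) • (x i * y) =
      B i i • (y * x j) + ((2 * B i j) • (y * x i) - B i i • (x j * y)) := by
    calc (2 * B i j) • (x i * y) = x i * ((2 * B i j) • y) := (mul_smul_comm _ _ _).symm
      _ = x i * (x i * x j + μ i j • (x j * x i)) := by rw [hrel]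
      _ = x i * (x i * x j) + x i * (x j * x i) := by rw [μij, one_smul, mul_add]
      _ = (x i * x i) * x j + (x i * x j) * x i := by rw [mul_assoc, mul_assoc]
      _ = B i i • (y * x j) + ((2 * B i j) • y - μ i j • (x j * x i)) * x i := by
          rw [sq i, smul_mul_assoc, mulrel i j]
      _ = B i i • (y * x j) + ((2 * B i j) • (y * x i) - (x j * x i) * x i) := by
          rw [sub_mul, smul_mul_assoc, μij, one_smul]
      _ = B i i • (y * x j) + ((2 * B i j) • (y * x i) - B i i • (x j * y)) := by
          rw [mul_assoc, sq i, mul_smul_comm]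
  have comm_i : x i * y = y * x i := by
    by_cases hBii : B i i = 0
    · apply cancel
      rw [L1, hBii]
      simp
    · have hy : y = (B i i)⁻¹ • (x i * x i) := by
        rw [sq i, smul_smul, inv_mul_cancel₀ hBii, one_smul]
      rw [hy, mul_smul_comm, smul_mul_assoc, mul_assoc]
  have comm_j : x j * y = y * x j := by
    have hBji : B j i = B i j := by
      have h := hB i j
      rw [μij, one_mul] at h
      exact h.symm
    have L2 : (2 * B i j) • (x j * y) =
        (2 * B i j) • (y * x j) - B j j • (x i * y) + B j j • (y * x i) := by
      calc (2 * B i j) • (x j * y) = x j * ((2 * B i j) • y) := (mul_smul_comm _ _ _).symm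
        _ = x j * (x i * x j + μ i j • (x j * x i)) := by rw [hrel]
        _ = x j * (x i * x j) + x j * (x j * x i) := by rw [μij, one_smul, mul_add]
        _ = (x j * x i) * x j + (x j * x j) * x i := by rw [mul_assoc, mul_assoc]
        _ = ((2 * B j i) • y - μ j i • (x i * x j)) * x j + B j j • (y * x i) := by
            rw [sq j, smul_mul_assoc, mulrel j i]
        _ = (2 * B j i) • (y * x j) - x i * (x j * x j) + B j j • (y * x i) := by
            rw [sub_mul, smul_mul_assoc, μji, one_smul, mul_assoc]
        _ = (2 * B i j) • (y * x j) - B j j • (x i * y) + B j j • (y * x i) := by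
            rw [sq j, mul_smul_comm, hBji]
    apply cancel
    rw [L2, comm_i]
    abel
  -- general k
  intro k
  have hik : μ k i * μ i k = 1 := (hμ k i).1
  have hstark : μ i k = μ k j := hstar i j hij k
  have hkikj : μ k i * μ k j = 1 := by rw [← hstark]; exact hik
  have Ek : (2 * B i j) • (x k * y) = (2 * B i j) • (y * x k) +
      ((2 * B k i) • (y * x j) - (μ k i * (2 * B k j)) • (x i * y)
        + ((2 * B k j) • (y * x i) - (μ k j * (2 * B k i)) • (x j * y))) := by
    have t1 : x k * (x i * x j) =
        (2 * B k i) • (y * x j) - (μ k i * (2 * B k j)) • (x i * y)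
          + (x i * x j) * x k := by
      calc x k * (x i * x j) = (x k * x i) * x j := (mul_assoc _ _ _).symm
        _ = (2 * B k i) • (y * x j) - μ k i • ((x i * x k) * x j) := by
            rw [mulrel k i, sub_mul, smul_mul_assoc, smul_mul_assoc]
        _ = (2 * B k i) • (y * x j) - μ k i • (x i * (x k * x j)) := by rw [mul_assoc]
        _ = (2 * B k i) • (y * x j)
            - μ k i • ((2 * B k j) • (x i * y) - μ k j • (x i * (x j * x k))) := by
            rw [mulrel k j, mul_sub, mul_smul_comm, mul_smul_comm]
        _ = (2 * B k i) • (y * x j) - ((μ k i * (2 * B k j)) • (x i * y)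
            - (μ k i * μ k j) • ((x i * x j) * x k)) := by
            rw [smul_sub, smul_smul, smul_smul, ← mul_assoc (x i)]
        _ = (2 * B k i) • (y * x j) - (μ k i * (2 * B k j)) • (x i * y)
            + (x i * x j) * x k := by rw [hkikj, one_smul]; abel
    have hkjki : μ k j * μ k i = 1 := by rw [mul_comm]; exact hkikj
    have t2 : x k * (x j * x i) =
        (2 * B k j) • (y * x i) - (μ k j * (2 * B k i)) • (x j * y)
          + (x j * x i) * x k := by
      calc x k * (x j * x i) = (x k * x j) * x i := (mul_assoc _ _ _).symm
        _ = (2 * B k j) • (y * x i) - μ k j • ((x j * x k) * x i) := by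
            rw [mulrel k j, sub_mul, smul_mul_assoc, smul_mul_assoc]
        _ = (2 * B k j) • (y * x i) - μ k j • (x j * (x k * x i)) := by rw [mul_assoc]
        _ = (2 * B k j) • (y * x i)
            - μ k j • ((2 * B k i) • (x j * y) - μ k i • (x j * (x i * x k))) := by
            rw [mulrel k i, mul_sub, mul_smul_comm, mul_smul_comm]
        _ = (2 * B k j) • (y * x i) - ((μ k j * (2 * B k i)) • (x j * y)
            - (μ k j * μ k i) • ((x j * x i) * x k)) := by
            rw [smul_sub, smul_smul, smul_smul, ← mul_assoc (x j)]
        _ = (2 * B k j) • (y * x i) - (μ k j * (2 * B k i)) • (x j * y)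
            + (x j * x i) * x k := by rw [hkjki, one_smul]; abel
    have hsum : (x i * x j) * x k + (x j * x i) * x k = (2 * B i j) • (y * x k) := by
      rw [← add_mul]
      have h := hrel i j
      rw [μij, one_smul] at h
      rw [h, smul_mul_assoc]
    calc (2 * B i j) • (x k * y) = x k * ((2 * B i j) • y) := (mul_smul_comm _ _ _).symm
      _ = x k * (x i * x j + μ i j • (x j * x i)) := by rw [hrel]
      _ = x k * (x i * x j) + x k * (x j * x i) := by rw [μij, one_smul, mul_add]
      _ = _ := by rw [t1, t2, ← hsum]; abel
  by_cases hzero : B i k = 0 ∧ B j k = 0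
  · have h1 : B k i = 0 := by rw [hB k i, hzero.1, mul_zero]
    have h2 : B k j = 0 := by rw [hB k j, hzero.2, mul_zero]
    apply cancel
    rw [Ek, h1, h2]
    simp
  · have hμ1 : μ k i = 1 ∧ μ k j = 1 := by
      rcases not_and_or.mp hzero with h | h
      · have hjk : μ j k = 1 := by
          have h' := hstar i k h j
          rw [μij] at h'
          exact h'.symm
        have hkj : μ k j = 1 := by
          have h' := (hμ k j).1
          rw [hjk, mul_one] at h'
          exact h'
        refine ⟨?_, hkj⟩
        have h' := hkikj
        rw [hkj, mul_one] at h'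
        exact h'
      · have hik1 : μ i k = 1 := by
          have h' := hstar j k h i
          rw [μji] at h'
          exact h'.symm
        have hki : μ k i = 1 := by
          have h' := (hμ k i).1
          rw [hik1, mul_one] at h'
          exact h'
        refine ⟨hki, ?_⟩
        have h' := hkikj
        rw [hki, one_mul] at h'
        exact h'
    apply cancel
    rw [Ek, hμ1.1, hμ1.2, one_mul, one_mul, comm_i, comm_j]
    abel

/-- Theorem 5.1: if `sCl(μ, B)` has full dimension (condition (★)) and `B ≠ 0`, then the
quadratic relations alone imply that the image of `Y` is central in the homogenization. -/
theorem homogenization_Y_central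
    (𝕜 : Type*) [Field 𝕜] (hchar : (2 : 𝕜) ≠ 0) (n : ℕ) (hn : 1 ≤ n)
    (μ B : Fin n → Fin n → 𝕜) (hμ : MulAntisym μ) (hB : MuSymm μ B)
    (hstar : StarCond μ B) (hB0 : B ≠ 0) :
    RingQuot.mkAlgHom 𝕜 (HomogRel 𝕜 n μ B) (ι 𝕜 (Sum.inr ()))
      ∈ Set.center (RingQuot (HomogRel 𝕜 n μ B)) := by
  obtain ⟨i, j, hij⟩ : ∃ i j, B i j ≠ 0 := by
    by_contra h
    push_neg at h
    exact hB0 (funext fun a => funext fun b => h a b)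
  set f := RingQuot.mkAlgHom 𝕜 (HomogRel 𝕜 n μ B) with hf
  have hrel : ∀ a b, f (ι 𝕜 (Sum.inl a)) * f (ι 𝕜 (Sum.inl b))
      + μ a b • (f (ι 𝕜 (Sum.inl b)) * f (ι 𝕜 (Sum.inl a)))
      = (2 * B a b) • f (ι 𝕜 (Sum.inr ())) := by
    intro a b
    have h := RingQuot.mkAlgHom_rel 𝕜 (HomogRel.rel (𝕜 := 𝕜) (n := n) (μ := μ) (B := B) a b)
    simpa using h
  have comm := key_comm hchar hμ hB hstar hij
    (fun k => f (ι 𝕜 (Sum.inl k))) (f (ι 𝕜 (Sum.inr ()))) hrel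
  rw [Semigroup.mem_center_iff]
  intro g
  obtain ⟨a, rfl⟩ := RingQuot.mkAlgHom_surjective 𝕜 (HomogRel 𝕜 n μ B) g
  show f a * f (ι 𝕜 (Sum.inr ())) = f (ι 𝕜 (Sum.inr ())) * f a
  induction a using FreeAlgebra.induction with
  | grade0 r => rw [AlgHom.commutes]; exact Algebra.commutes r _
  | grade1 v =>
    cases v with
    | inl k => exact comm k
    | inr u => rfl
  | mul a b ha hb => rw [map_mul, mul_assoc, hb, ← mul_assoc, ha, mul_assoc]
  | add a b ha hb => rw [map_add, add_mul, mul_add, ha, hb]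
end

section
/- Let μ : Fin n → Fin n → 𝕜 be multiplicatively antisymmetric and let D : Fin n → Fin n → 𝕜 be μ-symmetric with D ≠ 0. Then there exist μ-symmetric matrices M_1, …, M_n : Fin n → Fin n → 𝕜 which are linearly independent in the 𝕜-vector space of n × n matrices and satisfy D = M_1 + ⋯ + M_n. (Lemma 5.3.) -/
open FreeAlgebra

/-- Lemma 5.3: every nonzero μ-symmetric matrix `D` is a sum of `n` linearly independent
μ-symmetric matrices. -/
theorem muSymm_decomposition
    (𝕜 : Type*) [Field 𝕜] (hchar : (2 : 𝕜) ≠ 0) (n : ℕ) (hn : 1 ≤ n)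
    (μ D : Fin n → Fin n → 𝕜) (hμ : MulAntisym μ) (hD : MuSymm μ D) (hD0 : D ≠ 0) :
    ∃ M : Fin n → Fin n → Fin n → 𝕜,
      (∀ k, MuSymm μ (M k)) ∧ LinearIndependent 𝕜 M ∧ ∑ k, M k = D := by
  classical
  obtain ⟨a, b, hab⟩ : ∃ a b, D a b ≠ 0 := by
    by_contra h
    push_neg at h
    exact hD0 (funext fun i => funext fun j => h i j)
  set e : Fin n → Fin n → Fin n → 𝕜 := fun k i j => if i = k ∧ j = k then 1 else 0 with he
  have hesymm : ∀ k i j, e k i j = μ i j * e k j i := by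
    intro k i j
    simp only [he]
    by_cases h1 : i = k ∧ j = k
    · obtain ⟨h2, h3⟩ := h1
      rw [h2, h3]; simp [(hμ k k).2]
    · rw [if_neg h1, if_neg (by tauto), mul_zero]
  have he2 : ∀ i j, e i i j = μ i j * e j j i := by
    intro i j
    by_cases h : i = j
    · subst h
      simp [he, (hμ i i).2]
    · simp only [he]
      rw [if_neg (by tauto), if_neg (by tauto), mul_zero]
  have hea : ∀ i j, (∑ l, e l i j) = e i i j := by
    intro i j
    rw [Finset.sum_eq_single i]
    · intro l _ hl
      simp only [he]
      rw [if_neg (by tauto)]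
    · simp
  set M : Fin n → Fin n → Fin n → 𝕜 :=
    fun k i j => if k = a then D i j - (∑ l, e l i j) + e a i j else e k i j with hM
  have hMa : ∀ i j, M a i j = D i j - (∑ l, e l i j) + e a i j := by
    intro i j; simp [hM]
  have hMk : ∀ k, k ≠ a → ∀ i j, M k i j = e k i j := by
    intro k hk i j; simp [hM, hk]
  have heab : ∀ k, k ≠ a → e k a b = 0 := by
    intro k hk
    simp only [he]
    rw [if_neg (by rintro ⟨rfl, -⟩; exact hk rfl)]
  refine ⟨M, ?_, ?_, ?_⟩
  · intro k i j
    by_cases hk : k = a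
    · subst hk
      rw [hMa, hMa, hea, hea, hD i j, he2 i j, hesymm k i j]
      ring
    · rw [hMk k hk, hMk k hk]
      exact hesymm k i j
  · rw [Fintype.linearIndependent_iff]
    intro g hg
    have hval : ∀ i j, (∑ k, g k * M k i j) = 0 := by
      intro i j
      have := congrFun (congrFun hg i) j
      simpa [Finset.sum_apply] using this
    have hga : g a = 0 := by
      have h := hval a b
      rw [Finset.sum_eq_single a] at h
      · rw [hMa, hea] at h
        have : g a * D a b = 0 := by linear_combination h
        exact (mul_eq_zero.mp this).resolve_right hab
      · intro k _ hk
        rw [hMk k hk, heab k hk, mul_zero]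
      · simp
    intro k
    by_cases hk : k = a
    · rw [hk]; exact hga
    · have h := hval k k
      rw [Finset.sum_eq_single k] at h
      · rw [hMk k hk] at h
        simpa [he] using h
      · intro l _ hl
        by_cases hla : l = a
        · subst hla; rw [hga, zero_mul]
        · rw [hMk l hla]
          simp only [he]
          rw [if_neg (by rintro ⟨rfl, -⟩; exact hl rfl), mul_zero]
      · simp
  · funext i j
    simp only [Finset.sum_apply]
    rw [Finset.sum_eq_sum_sdiff_singleton_add (Finset.mem_univ a), hMa]
    have h1 : ∀ k ∈ Finset.univ \ {a}, M k i j = e k i j := by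
      intro k hk
      simp only [Finset.mem_sdiff, Finset.mem_singleton] at hk
      exact hMk k hk.2 i j
    rw [Finset.sum_congr rfl h1]
    have h2 : ∑ k ∈ Finset.univ \ {a}, e k i j = (∑ l, e l i j) - e a i j := by
      rw [eq_sub_iff_add_eq, Finset.sum_eq_sum_sdiff_singleton_add (Finset.mem_univ a)]
    rw [h2]; ring
end

section
/- Suppose B ≠ 0. Then there exist linearly independent μ-symmetric matrices M_1, …, M_n : Fin n → Fin n → 𝕜 with M_1 + ⋯ + M_n = 2 • B such that, defining A(n) as the quotient of the free algebra on generators X_1, …, X_n, y_1, …, y_n (i.e. FreeAlgebra 𝕜 (Fin n ⊕ Fin n)) by the two-sided ideal generated by the elements X_i * X_j + μ i j • (X_j * X_i) − Σ_k (M_k i j) • y_k for all i, j, together with the elements y_k * X_i − X_i * y_k and y_k * y_l − y_l * y_k for all i, k, l, the following hold: (1) there is a surjective 𝕜-algebra homomorphism from A(n) onto sCl(μ, B) sending the image of X_i to x̄_i and the image of each y_k to 1, and (2) A(n) is generated as a 𝕜-algebra by the images of X_1, …, X_n. (Theorem 5.4: sCl(μ, B) is a quotient of a graded skew Clifford algebra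 generated in degree one.) -/
open FreeAlgebra

/-- The defining relations of the graded skew Clifford algebra `A(n)`: the quadratic
relations `X_i X_j + μ i j • (X_j X_i) = Σ_k (M_k i j) • y_k`, together with relations
making each `y_k` central. -/
inductive AnRel (𝕜 : Type*) [Field 𝕜] (n : ℕ) (μ : Fin n → Fin n → 𝕜)
    (M : Fin n → Fin n → Fin n → 𝕜) :
    FreeAlgebra 𝕜 (Fin n ⊕ Fin n) → FreeAlgebra 𝕜 (Fin n ⊕ Fin n) → Prop
  | xx (i j : Fin n) : AnRel 𝕜 n μ M
      (ι 𝕜 (Sum.inl i) * ι 𝕜 (Sum.inl j) + μ i j • (ι 𝕜 (Sum.inl j) * ι 𝕜 (Sum.inl i)))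
      (∑ k, M k i j • ι 𝕜 (Sum.inr k))
  | yx (k i : Fin n) : AnRel 𝕜 n μ M
      (ι 𝕜 (Sum.inr k) * ι 𝕜 (Sum.inl i)) (ι 𝕜 (Sum.inl i) * ι 𝕜 (Sum.inr k))
  | yy (k l : Fin n) : AnRel 𝕜 n μ M
      (ι 𝕜 (Sum.inr k) * ι 𝕜 (Sum.inr l)) (ι 𝕜 (Sum.inr l) * ι 𝕜 (Sum.inr k))

/-- Theorem 5.4: if `B ≠ 0`, then `sCl(μ, B)` is a quotient of a graded skew Clifford
algebra `A(n)` that is generated by (the images of) its degree-one generators. -/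
theorem skewClifford_quotient_of_graded_skew_Clifford
    (𝕜 : Type*) [Field 𝕜] (hchar : (2 : 𝕜) ≠ 0) (n : ℕ) (hn : 1 ≤ n)
    (μ B : Fin n → Fin n → 𝕜) (hμ : MulAntisym μ) (hB : MuSymm μ B) (hB0 : B ≠ 0) :
    ∃ M : Fin n → Fin n → Fin n → 𝕜,
      (∀ k, MuSymm μ (M k)) ∧ LinearIndependent 𝕜 M ∧
      (∀ i j, ∑ k, M k i j = 2 * B i j) ∧
      (∃ φ : RingQuot (AnRel 𝕜 n μ M) →ₐ[𝕜] sCl 𝕜 n μ B,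
        Function.Surjective φ ∧
        (∀ i, φ (RingQuot.mkAlgHom 𝕜 (AnRel 𝕜 n μ M) (ι 𝕜 (Sum.inl i)))
            = sClGen 𝕜 n μ B i) ∧
        (∀ k, φ (RingQuot.mkAlgHom 𝕜 (AnRel 𝕜 n μ M) (ι 𝕜 (Sum.inr k))) = 1)) ∧
      Algebra.adjoin 𝕜
        (Set.range fun i => RingQuot.mkAlgHom 𝕜 (AnRel 𝕜 n μ M) (ι 𝕜 (Sum.inl i))) = ⊤ := by
  classical
  -- pick an entry of B that is nonzero
  obtain ⟨p, hp⟩ : ∃ p, B p ≠ 0 := Function.ne_iff.mp hB0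
  obtain ⟨q, hpq⟩ : ∃ q, B p q ≠ 0 := Function.ne_iff.mp hp
  have h2Bpq : 2 * B p q ≠ 0 := mul_ne_zero hchar hpq
  set M : Fin n → Fin n → Fin n → 𝕜 := fun k i j =>
    if k = p then 2 * B i j - (if i = j ∧ i ≠ p then 1 else 0)
    else if k = i ∧ i = j then 1 else 0 with hMdef
  -- pointwise descriptions of M
  have e1 : ∀ k, M k p q = if k = p then 2 * B p q else 0 := by
    intro k
    by_cases hk : k = p
    · subst hk
      simp [hMdef]
    · simp [hMdef, hk]
  have e2 : ∀ k i, i ≠ p → M k i i =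
      if k = p then 2 * B i i - 1 else if k = i then 1 else 0 := by
    intro k i hi
    by_cases hk : k = p
    · subst hk; simp [hMdef, hi]
    · simp [hMdef, hk]
  have e3 : ∀ k i j, i ≠ j → M k i j = if k = p then 2 * B i j else 0 := by
    intro k i j hij
    by_cases hk : k = p
    · subst hk; simp [hMdef, hij]
    · simp [hMdef, hk, hij]
  -- sum condition
  have hsum : ∀ i j, ∑ k, M k i j = 2 * B i j := by
    intro i j
    rcases eq_or_ne i j with rfl | hij
    · rcases eq_or_ne i p with rfl | hip
      · have hkk : ∀ k, M k i i = if k = i then 2 * B i i else 0 := by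
          intro k
          by_cases hk : k = i
          · subst hk; simp [hMdef]
          · simp [hMdef, hk]
        simp [hkk]
      · have hkk : ∀ k, M k i i = (if k = p then 2 * B i i - 1 else 0) +
            (if k = i then 1 else 0) := by
          intro k
          rw [e2 k i hip]
          by_cases hk : k = p
          · subst hk; simp [Ne.symm hip]
          · simp [hk]
        rw [Finset.sum_congr rfl fun k _ => hkk k, Finset.sum_add_distrib]
        simp
    · simp [fun k => e3 k i j hij]
  -- μ-symmetry of each M k
  have hsym : ∀ k, MuSymm μ (M k) := by
    intro k i j
    rcases eq_or_ne i j with rfl | hij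
    · rw [(hμ i i).2, one_mul]
    · rw [e3 k i j hij, e3 k j i (Ne.symm hij)]
      by_cases hk : k = p
      · simp only [if_pos hk]
        rw [hB i j]; ring
      · simp [hk]
  -- linear independence
  have hli : LinearIndependent 𝕜 M := by
    rw [Fintype.linearIndependent_iff]
    intro g hg
    have hpt : ∀ i j, ∑ k, g k * M k i j = 0 := by
      intro i j
      have := congrFun (congrFun hg i) j
      simpa [Finset.sum_apply, Pi.smul_apply, smul_eq_mul] using this
    have hgp : g p = 0 := by
      have h1 := hpt p q
      simp only [fun k => e1 k, mul_ite, mul_zero,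
        Finset.sum_ite_eq', Finset.mem_univ, if_pos] at h1
      rcases mul_eq_zero.mp h1 with h | h
      · exact h
      · exact absurd h h2Bpq
    intro k
    by_cases hk : k = p
    · subst hk; exact hgp
    · have h2 := hpt k k
      rw [Finset.sum_eq_single k] at h2
      · rw [e2 k k hk] at h2
        simpa [hk] using h2
      · intro l _ hlk
        by_cases hlp : l = p
        · subst hlp; simp [hgp]
        · rw [e2 l k hk]
          simp [hlp, hlk]
      · simp
  -- the algebra homomorphism
  set f : FreeAlgebra 𝕜 (Fin n ⊕ Fin n) →ₐ[𝕜] sCl 𝕜 n μ B :=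
    FreeAlgebra.lift 𝕜 (Sum.elim (sClGen 𝕜 n μ B) fun _ => (1 : sCl 𝕜 n μ B)) with hfdef
  have hfι : ∀ v, f (ι 𝕜 v) = Sum.elim (sClGen 𝕜 n μ B) (fun _ => (1 : sCl 𝕜 n μ B)) v := by
    intro v; simp [hfdef]
  have hf : ∀ ⦃a b⦄, AnRel 𝕜 n μ M a b → f a = f b := by
    intro a b h
    induction h with
    | xx i j =>
        have hrel := RingQuot.mkAlgHom_rel 𝕜 (sClRel.rel (𝕜 := 𝕜) (n := n) (μ := μ) (B := B) i j)
        simp only [map_add, map_mul, map_smul, map_one] at hrel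
        simp only [map_add, map_mul, map_smul, map_sum, hfι, Sum.elim_inl, Sum.elim_inr]
        calc sClGen 𝕜 n μ B i * sClGen 𝕜 n μ B j
              + μ i j • (sClGen 𝕜 n μ B j * sClGen 𝕜 n μ B i)
            = (2 * B i j) • (1 : sCl 𝕜 n μ B) := hrel
          _ = (∑ k, M k i j) • (1 : sCl 𝕜 n μ B) := by rw [hsum]
          _ = ∑ k, M k i j • (1 : sCl 𝕜 n μ B) := by rw [Finset.sum_smul]
    | yx k i =>
        simp only [map_mul, hfι, Sum.elim_inl, Sum.elim_inr, one_mul, mul_one]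
    | yy k l =>
        simp only [map_mul, hfι, Sum.elim_inr, one_mul, mul_one]
  set φ : RingQuot (AnRel 𝕜 n μ M) →ₐ[𝕜] sCl 𝕜 n μ B :=
    RingQuot.liftAlgHom 𝕜 ⟨f, hf⟩ with hφdef
  have hX : ∀ i, φ (RingQuot.mkAlgHom 𝕜 (AnRel 𝕜 n μ M) (ι 𝕜 (Sum.inl i)))
      = sClGen 𝕜 n μ B i := by
    intro i
    rw [hφdef, RingQuot.liftAlgHom_mkAlgHom_apply]
    simp [hfι]
  have hY : ∀ k, φ (RingQuot.mkAlgHom 𝕜 (AnRel 𝕜 n μ M) (ι 𝕜 (Sum.inr k))) = 1 := by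
    intro k
    rw [hφdef, RingQuot.liftAlgHom_mkAlgHom_apply]
    simp [hfι]
  -- surjectivity
  have hsurj : Function.Surjective φ := by
    set ψ : FreeAlgebra 𝕜 (Fin n) →ₐ[𝕜] RingQuot (AnRel 𝕜 n μ M) :=
      (RingQuot.mkAlgHom 𝕜 (AnRel 𝕜 n μ M)).comp
        (FreeAlgebra.lift 𝕜 fun i => ι 𝕜 (Sum.inl i)) with hψdef
    have hcomp : φ.comp ψ = RingQuot.mkAlgHom 𝕜 (sClRel 𝕜 n μ B) := by
      apply FreeAlgebra.hom_ext
      funext i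
      simp only [Function.comp_apply, AlgHom.comp_apply, hψdef, FreeAlgebra.lift_ι_apply]
      exact hX i
    intro z
    obtain ⟨w, rfl⟩ := RingQuot.mkAlgHom_surjective 𝕜 (sClRel 𝕜 n μ B) z
    exact ⟨ψ w, AlgHom.congr_fun hcomp w⟩
  -- generation in degree one
  have hadj : Algebra.adjoin 𝕜
      (Set.range fun i => RingQuot.mkAlgHom 𝕜 (AnRel 𝕜 n μ M) (ι 𝕜 (Sum.inl i))) = ⊤ := by
    set X : Fin n → RingQuot (AnRel 𝕜 n μ M) :=
      fun i => RingQuot.mkAlgHom 𝕜 (AnRel 𝕜 n μ M) (ι 𝕜 (Sum.inl i)) with hXdef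
    set Y : Fin n → RingQuot (AnRel 𝕜 n μ M) :=
      fun k => RingQuot.mkAlgHom 𝕜 (AnRel 𝕜 n μ M) (ι 𝕜 (Sum.inr k)) with hYdef
    set S := Algebra.adjoin 𝕜 (Set.range X) with hSdef
    have hXS : ∀ i, X i ∈ S := fun i => Algebra.subset_adjoin ⟨i, rfl⟩
    have relEq : ∀ i j, X i * X j + μ i j • (X j * X i) = ∑ k, M k i j • Y k := by
      intro i j
      have h := RingQuot.mkAlgHom_rel 𝕜 (AnRel.xx (𝕜 := 𝕜) (n := n) (μ := μ) (M := M) i j)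
      simpa only [map_add, map_mul, map_smul, map_sum, hXdef, hYdef] using h
    have hYpS : Y p ∈ S := by
      have h := relEq p q
      have hs : ∑ k, M k p q • Y k = (2 * B p q) • Y p := by
        simp only [fun k => e1 k, ite_smul, zero_smul]
        simp
      rw [hs] at h
      have hy : Y p = (2 * B p q)⁻¹ • (X p * X q + μ p q • (X q * X p)) := by
        rw [h, smul_smul, inv_mul_cancel₀ h2Bpq, one_smul]
      rw [hy]
      exact Subalgebra.smul_mem _ (add_mem (mul_mem (hXS p) (hXS q))
        (Subalgebra.smul_mem _ (mul_mem (hXS q) (hXS p)) _)) _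
    have hYS : ∀ k, Y k ∈ S := by
      intro k
      by_cases hk : k = p
      · subst hk; exact hYpS
      · have h := relEq k k
        have hs : ∑ l, M l k k • Y l = (2 * B k k - 1) • Y p + Y k := by
          have hterm : ∀ l, M l k k • Y l = (if l = p then (2 * B k k - 1) • Y p else 0) +
              (if l = k then Y k else 0) := by
            intro l
            rw [e2 l k hk]
            by_cases hlp : l = p
            · subst hlp; simp [Ne.symm hk]
            · by_cases hlk : l = k
              · subst hlk; simp [hlp]
              · simp [hlp, hlk]
          rw [Finset.sum_congr rfl fun l _ => hterm l, Finset.sum_add_distrib]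
          simp
        rw [hs] at h
        have hy : Y k = (X k * X k + μ k k • (X k * X k)) - (2 * B k k - 1) • Y p := by
          rw [h]; abel
        rw [hy]
        exact sub_mem (add_mem (mul_mem (hXS k) (hXS k))
          (Subalgebra.smul_mem _ (mul_mem (hXS k) (hXS k)) _))
          (Subalgebra.smul_mem _ hYpS _)
    rw [eq_top_iff]
    rintro z -
    obtain ⟨w, rfl⟩ := RingQuot.mkAlgHom_surjective 𝕜 (AnRel 𝕜 n μ M) z
    induction w using FreeAlgebra.induction with
    | grade0 r => simpa using S.algebraMap_mem r
    | grade1 v =>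
        rcases v with i | k
        · exact hXS i
        · exact hYS k
    | mul a b ha hb => rw [map_mul]; exact mul_mem ha hb
    | add a b ha hb => rw [map_add]; exact add_mem ha hb
  exact ⟨M, hsym, hli, hsum, ⟨φ, hsurj, hX, hY⟩, hadj⟩
end

section
/- Suppose condition (★) holds (so sCl(μ, B) has full dimension 2^n), and let M_1, …, M_n : Fin n → Fin n → 𝕜 be μ-symmetric matrices with M_1 + ⋯ + M_n = 2 • B. Let A(n) be the quotient of the free algebra on generators X_1, …, X_n, y_1, …, y_n (i.e. FreeAlgebra 𝕜 (Fin n ⊕ Fin n)) by the two-sided ideal generated by the elements X_i * X_j + μ i j • (X_j * X_i) − Σ_k (M_k i j) • y_k for all i, j, together with the elements y_k * X_i − X_i * y_k and y_k * y_l − y_l * y_k for all i, k, l. If A(n) is a domain (a nontrivial ring with no zero divisors), then (μ i j)^2 = 1 for all i, j. (The forward implication established in the proof of Theorem 5.5.) -/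
open FreeAlgebra

/-! Suppose `q = μ i j` had `q² ≠ 1` (so `i ≠ j`). In `A(n)` the element
`z = x_i x_j + q x_j x_i` is central, and so are `x_i²` and `x_j²` since `2 x_a² = Σ_k M_k a a y_k`.
Multiplying the relation by `x_i` on either side gives `((1 - q²) x_j x_i - (1 - q) z) x_i = 0`,
so in a domain `(1 + q) x_j x_i = z`; likewise `(1 + q) x_i x_j = z`, and `x_i, x_j` commute.
They do not: `A(n)` maps to `4 × 4` matrices with `x_i, x_j` going to nonzero square-zero
matrices `U, V` with `U V = -q V U ≠ V U`. -/

section SkewPair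

variable {𝕜 A : Type*} [Field 𝕜] [Ring A] [Algebra 𝕜 A] {u v z : A} {q : 𝕜}

theorem mul_eq_zero_of_skew_relation_left (h : u * v + q • (v * u) = z) (hzu : Commute z u)
    (huu : Commute (u * u) v) : ((1 - q ^ 2) • (v * u) - (1 - q) • z) * u = 0 := by
  have hR : (u * v + q • (v * u)) * u = z * u := by rw [h]
  have hL : u * (u * v + q • (v * u)) = z * u := by rw [h, hzu.eq]
  simp only [add_mul, mul_add, sub_mul, smul_mul_assoc, mul_smul_comm, ← mul_assoc,
    huu.eq] at hR hL ⊢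
  linear_combination (norm := module) hL - q • hR

theorem mul_eq_zero_of_skew_relation_right (h : u * v + q • (v * u) = z) (hzv : Commute z v)
    (hvv : Commute (v * v) u) : ((1 - q ^ 2) • (u * v) - (1 - q) • z) * v = 0 := by
  have hR : (u * v + q • (v * u)) * v = z * v := by rw [h]
  have hL : v * (u * v + q • (v * u)) = z * v := by rw [h, hzv.eq]
  simp only [add_mul, mul_add, sub_mul, smul_mul_assoc, mul_smul_comm, ← mul_assoc,
    hvv.eq] at hR hL ⊢
  linear_combination (norm := module) hR - q • hL

theorem one_add_smul_eq_of_mul_eq_zero [NoZeroDivisors A] (hq : q ≠ 1) {w : A} (hu : u ≠ 0)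
    (h : ((1 - q ^ 2) • w - (1 - q) • z) * u = 0) : (1 + q) • w = z := by
  have h' : (1 - q) • ((1 + q) • w) = (1 - q) • z := by
    rw [smul_smul, ← sub_eq_zero, show (1 - q) * (1 + q) = 1 - q ^ 2 by ring]
    exact (mul_eq_zero.1 h).resolve_right hu
  exact smul_right_injective A (sub_ne_zero.2 hq.symm) h'

theorem commute_of_skew_relation [NoZeroDivisors A] (hq : q ^ 2 ≠ 1) (hu : u ≠ 0) (hv : v ≠ 0)
    (h : u * v + q • (v * u) = z) (hzu : Commute z u) (hzv : Commute z v)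
    (huu : Commute (u * u) v) (hvv : Commute (v * v) u) : Commute u v := by
  have hq1 : q ≠ 1 := by rintro rfl; simp at hq
  have hq' : 1 + q ≠ 0 := by
    intro h0; apply hq; linear_combination (q - 1) * h0
  have hvu := one_add_smul_eq_of_mul_eq_zero hq1 hu
    (mul_eq_zero_of_skew_relation_left h hzu huu)
  have huv := one_add_smul_eq_of_mul_eq_zero hq1 hv
    (mul_eq_zero_of_skew_relation_right h hzv hvv)
  exact smul_right_injective A hq' (huv.trans hvu.symm)

end SkewPair

section SkewNilpotentPair

open Matrix Kronecker

variable {R : Type*} [CommRing R]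

/- A Jordan–Wigner-type realization of `R⟨u, v⟩ / (u², v², u v + q v u)` on `R² ⊗ R²`. -/

noncomputable def skewNilU : Matrix (Fin 2 × Fin 2) (Fin 2 × Fin 2) R :=
  single 0 1 1 ⊗ₖ 1

noncomputable def skewNilV (q : R) : Matrix (Fin 2 × Fin 2) (Fin 2 × Fin 2) R :=
  diagonal ![1, -q] ⊗ₖ single 0 1 1

theorem single_zero_one_mul_self :
    (single 0 1 1 : Matrix (Fin 2) (Fin 2) R) * single 0 1 1 = 0 :=
  single_mul_single_of_ne 1 0 1 0 (by decide) 1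

theorem diagonal_mul_single_zero_one (q : R) :
    diagonal ![1, -q] * single 0 1 1 = (single 0 1 1 : Matrix (Fin 2) (Fin 2) R) := by
  ext a b
  fin_cases a <;> fin_cases b <;> simp [single]

theorem single_zero_one_mul_diagonal (q : R) :
    single 0 1 1 * diagonal ![1, -q] = (-q) • (single 0 1 1 : Matrix (Fin 2) (Fin 2) R) := by
  ext a b
  fin_cases a <;> fin_cases b <;> simp [single]

theorem skewNilU_mul_self : (skewNilU : Matrix _ _ R) * skewNilU = 0 := by
  rw [skewNilU, ← mul_kronecker_mul, single_zero_one_mul_self, zero_kronecker]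

theorem skewNilV_mul_self (q : R) : skewNilV q * skewNilV q = 0 := by
  rw [skewNilV, ← mul_kronecker_mul, single_zero_one_mul_self, kronecker_zero]

theorem skewNilV_mul_skewNilU (q : R) :
    skewNilV q * skewNilU = single 0 1 1 ⊗ₖ single 0 1 1 := by
  rw [skewNilV, skewNilU, ← mul_kronecker_mul, mul_one, diagonal_mul_single_zero_one]

theorem skewNilU_mul_skewNilV (q : R) :
    skewNilU * skewNilV q = (-q) • (skewNilV q * skewNilU) := by
  rw [skewNilV_mul_skewNilU, skewNilU, skewNilV, ← mul_kronecker_mul, one_mul,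
    single_zero_one_mul_diagonal, smul_kronecker]

theorem skewNilV_mul_skewNilU_apply (q : R) :
    (skewNilV q * skewNilU : Matrix (Fin 2 × Fin 2) (Fin 2 × Fin 2) R) (0, 0) (1, 1) = 1 := by
  simp [skewNilV_mul_skewNilU]

theorem skewNilU_ne_zero [Nontrivial R] : (skewNilU : Matrix _ _ R) ≠ 0 := fun h ↦ by
  simpa [h] using skewNilV_mul_skewNilU_apply (0 : R)

theorem skewNilV_ne_zero [Nontrivial R] (q : R) : skewNilV q ≠ 0 := fun h ↦ by
  simpa [h] using skewNilV_mul_skewNilU_apply q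

theorem not_commute_skewNilU_skewNilV {q : R} (hq : q ≠ -1) : ¬Commute skewNilU (skewNilV q) :=
  fun h ↦ by
    have := congrFun (congrFun h.eq (0, 0)) (1, 1)
    rw [skewNilU_mul_skewNilV, Matrix.smul_apply, skewNilV_mul_skewNilU_apply, smul_eq_mul,
      mul_one] at this
    exact hq (neg_eq_iff_eq_neg.1 this)

end SkewNilpotentPair

namespace AnRel

variable {𝕜 : Type*} [Field 𝕜] {n : ℕ} {μ : Fin n → Fin n → 𝕜} {M : Fin n → Fin n → Fin n → 𝕜}

variable (μ M) in
noncomputable def genX (a : Fin n) : RingQuot (AnRel 𝕜 n μ M) :=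
  RingQuot.mkAlgHom 𝕜 (AnRel 𝕜 n μ M) (ι 𝕜 (Sum.inl a))

variable (μ M) in
noncomputable def genY (k : Fin n) : RingQuot (AnRel 𝕜 n μ M) :=
  RingQuot.mkAlgHom 𝕜 (AnRel 𝕜 n μ M) (ι 𝕜 (Sum.inr k))

theorem genX_mul_add_smul (a b : Fin n) :
    genX μ M a * genX μ M b + μ a b • (genX μ M b * genX μ M a) = ∑ k, M k a b • genY μ M k := by
  simpa only [genX, genY, map_add, map_mul, map_smul, map_sum] using
    RingQuot.mkAlgHom_rel 𝕜 (xx (μ := μ) (M := M) a b)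

theorem commute_genY_genX (k a : Fin n) : Commute (genY μ M k) (genX μ M a) := by
  simpa only [genX, genY, Commute, SemiconjBy, map_mul] using
    RingQuot.mkAlgHom_rel 𝕜 (yx (μ := μ) (M := M) k a)

theorem commute_sum_smul_genY (c : Fin n → 𝕜) (a : Fin n) :
    Commute (∑ k, c k • genY μ M k) (genX μ M a) :=
  Commute.sum_left _ _ _ fun k _ ↦ (commute_genY_genX k a).smul_left (c k)

theorem commute_genX_mul_self (hchar : (2 : 𝕜) ≠ 0) {a : Fin n} (ha : μ a a = 1) (b : Fin n) :
    Commute (genX μ M a * genX μ M a) (genX μ M b) := by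
  have h := genX_mul_add_smul (μ := μ) (M := M) a a
  rw [ha, one_smul, ← two_smul 𝕜] at h
  simpa [← h, smul_smul, hchar] using
    (commute_sum_smul_genY (μ := μ) (M := M) (M · a a) b).smul_left (2⁻¹ : 𝕜)

noncomputable def liftOfSkew {R : Type*} [Ring R] [Algebra 𝕜 R] (f : Fin n → R)
    (hf : ∀ a b, f a * f b + μ a b • (f b * f a) = 0) : RingQuot (AnRel 𝕜 n μ M) →ₐ[𝕜] R :=
  RingQuot.liftAlgHom 𝕜 ⟨FreeAlgebra.lift 𝕜 (Sum.elim f 0), fun _ _ h ↦ by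
    cases h <;> simp [hf]⟩

theorem liftOfSkew_genX {R : Type*} [Ring R] [Algebra 𝕜 R] (f : Fin n → R)
    (hf : ∀ a b, f a * f b + μ a b • (f b * f a) = 0) (a : Fin n) :
    liftOfSkew (M := M) f hf (genX μ M a) = f a := by
  simp [liftOfSkew, genX]

variable (M) in
theorem exists_algHom_genX_eq_skewNil (hμ : MulAntisym μ) {i j : Fin n} (hij : i ≠ j) :
    ∃ φ : RingQuot (AnRel 𝕜 n μ M) →ₐ[𝕜] Matrix (Fin 2 × Fin 2) (Fin 2 × Fin 2) 𝕜,
      φ (genX μ M i) = skewNilU ∧ φ (genX μ M j) = skewNilV (μ i j) := by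
  let f : Fin n → Matrix (Fin 2 × Fin 2) (Fin 2 × Fin 2) 𝕜 := fun a ↦
    if a = i then skewNilU else if a = j then skewNilV (μ i j) else 0
  have hf : ∀ a b, f a * f b + μ a b • (f b * f a) = 0 := by
    intro a b
    simp only [f]
    split_ifs <;> subst_vars <;>
      simp_all [skewNilU_mul_self, skewNilV_mul_self, skewNilU_mul_skewNilV, smul_smul, hμ _ _]
  exact ⟨liftOfSkew f hf, by simp [liftOfSkew_genX, f], by simp [liftOfSkew_genX, f, hij.symm]⟩

end AnRel

open AnRel in
theorem domain_homogenization_implies_mu_sq_one_general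
    (𝕜 : Type*) [Field 𝕜] (hchar : (2 : 𝕜) ≠ 0) (n : ℕ)
    (μ : Fin n → Fin n → 𝕜) (hμ : MulAntisym μ)
    (M : Fin n → Fin n → Fin n → 𝕜)
    (hnzd : ∀ a b : RingQuot (AnRel 𝕜 n μ M), a * b = 0 → a = 0 ∨ b = 0) :
    ∀ i j, μ i j ^ 2 = 1 := by
  intro i j
  by_contra hq
  have hij : i ≠ j := by rintro rfl; simp [(hμ i i).2] at hq
  have : NoZeroDivisors (RingQuot (AnRel 𝕜 n μ M)) := ⟨hnzd _ _⟩
  obtain ⟨φ, hφi, hφj⟩ := exists_algHom_genX_eq_skewNil M hμ hij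
  have hxi : genX μ M i ≠ 0 := fun h ↦ skewNilU_ne_zero (by rw [← hφi, h, map_zero])
  have hxj : genX μ M j ≠ 0 := fun h ↦ skewNilV_ne_zero _ (by rw [← hφj, h, map_zero])
  have hcomm := commute_of_skew_relation hq hxi hxj (genX_mul_add_smul i j)
    (commute_sum_smul_genY _ i) (commute_sum_smul_genY _ j)
    (commute_genX_mul_self hchar (hμ i i).2 j) (commute_genX_mul_self hchar (hμ j j).2 i)
  have hq' : μ i j ≠ -1 := fun h ↦ hq (by rw [h]; norm_num)
  exact not_commute_skewNilU_skewNilV hq' (by simpa only [hφi, hφj] using hcomm.map φ)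

/-- From the proof of Theorem 5.5: if `sCl(μ, B)` has full dimension (condition (★)) and
some homogenization `A(n)` is a domain, then `(μ i j)^2 = 1` for all `i, j`. -/
theorem domain_homogenization_implies_mu_sq_one
    (𝕜 : Type*) [Field 𝕜] (hchar : (2 : 𝕜) ≠ 0) (n : ℕ) (hn : 1 ≤ n)
    (μ B : Fin n → Fin n → 𝕜) (hμ : MulAntisym μ) (hB : MuSymm μ B)
    (hstar : StarCond μ B)
    (M : Fin n → Fin n → Fin n → 𝕜) (hM : ∀ k, MuSymm μ (M k))
    (hMB : ∀ i j, ∑ k, M k i j = 2 * B i j)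
    (hnt : Nontrivial (RingQuot (AnRel 𝕜 n μ M)))
    (hnzd : ∀ a b : RingQuot (AnRel 𝕜 n μ M), a * b = 0 → a = 0 ∨ b = 0) :
    ∀ i j, μ i j ^ 2 = 1 :=
  domain_homogenization_implies_mu_sq_one_general 𝕜 hchar n μ hμ M hnzd
end

section
/- Let n = 2, let μ be the multiplicatively antisymmetric matrix with μ 1 1 = μ 2 2 = 1 and μ 1 2 = μ 2 1 = −1, and let B be the μ-symmetric matrix with B 1 1 = B 2 2 = 0, B 1 2 = 1 and B 2 1 = −1. Then the skew Clifford algebra sCl(μ, B) is the trivial (zero) ring, i.e. it is a subsingleton. (Example 3.7.) -/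
open FreeAlgebra

/-- Example 3.7: with `μ = [[1,-1],[-1,1]]` and `B = [[0,1],[-1,0]]`, the skew Clifford
algebra `sCl(μ, B)` is the trivial (zero) ring. -/
theorem example_zero_dimensional_skewClifford
    (𝕜 : Type*) [Field 𝕜] (hchar : (2 : 𝕜) ≠ 0) :
    Subsingleton (sCl 𝕜 2 ![![1, -1], ![-1, 1]] ![![0, 1], ![-1, 0]]) := by
  set μ : Fin 2 → Fin 2 → 𝕜 := ![![1, -1], ![-1, 1]] with hμ
  set B : Fin 2 → Fin 2 → 𝕜 := ![![0, 1], ![-1, 0]] with hB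
  set f := RingQuot.mkAlgHom 𝕜 (sClRel 𝕜 2 μ B) with hf
  set a := f (ι 𝕜 0) with ha
  set b := f (ι 𝕜 1) with hb
  have h00 := RingQuot.mkAlgHom_rel 𝕜 (@sClRel.rel 𝕜 _ 2 μ B 0 0)
  have h01 := RingQuot.mkAlgHom_rel 𝕜 (@sClRel.rel 𝕜 _ 2 μ B 0 1)
  simp only [map_add, map_mul, map_smul, map_one, map_zero, hμ, hB,
    Matrix.cons_val_zero, Matrix.cons_val_one, Matrix.head_cons, one_smul,
    mul_one, mul_zero, zero_smul, ← hf, ← ha, ← hb] at h00 h01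
  -- h00 : a * a + a * a = 0,  h01 : a * b + (-1:𝕜) • (b * a) = (2:𝕜) • 1
  have ha2 : a * a = 0 := by
    have h2 : (2 : 𝕜) • (a * a) = 0 := by rw [two_smul]; exact h00
    rcases smul_eq_zero.mp h2 with h | h
    · exact absurd h hchar
    · exact h
  have hL : (-1 : 𝕜) • (a * b * a) = (2 : 𝕜) • a := by
    have h := congrArg (a * ·) h01
    simp only [mul_add] at h
    rw [← mul_assoc a a b, ha2, zero_mul, zero_add, mul_smul_comm, ← mul_assoc,
      mul_smul_comm, mul_one] at h
    exact h
  have hR : a * b * a = (2 : 𝕜) • a := by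
    have h := congrArg (· * a) h01
    simp only [add_mul] at h
    rw [smul_mul_assoc, mul_assoc b a a, ha2, mul_zero, smul_zero, add_zero,
      smul_mul_assoc, one_mul] at h
    exact h
  have ha0 : a = 0 := by
    have hE : ((-1 : 𝕜) * 2) • a = (2 : 𝕜) • a := by
      rw [← smul_smul]
      nth_rewrite 1 [← hR]
      exact hL
    have hzero : (2 : 𝕜) • a + (2 : 𝕜) • a = 0 := by
      nth_rewrite 1 [← hE]
      rw [← add_smul]
      norm_num
    have h4 : ((2 : 𝕜) * 2) • a = 0 := by
      rw [show (2 : 𝕜) * 2 = 2 + 2 by ring, add_smul]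
      exact hzero
    rcases smul_eq_zero.mp h4 with h | h
    · exact absurd h (mul_ne_zero hchar hchar)
    · exact h
  have h1 : (1 : sCl 𝕜 2 μ B) = 0 := by
    have h2 : (2 : 𝕜) • (1 : sCl 𝕜 2 μ B) = 0 := by
      rw [← h01, ha0]; simp
    rcases smul_eq_zero.mp h2 with h | h
    · exact absurd h hchar
    · exact h
  exact subsingleton_of_zero_eq_one h1.symm
end
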